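/- arXiv:1009.3973 — 6 statements merged into one kernel-verified Lean document; each statement's English description precedes it below -/
import Mathlib

section
/- If F is a family of r-element subsets of {1,...,n} such that any k of its members (k ≥ 2) have a common element, and r ≤ (k-1)n/k, then |F| ≤ C(n-1, r-1). -/
/-!
Katona's cycle method. Fix a permutation `σ` of `[n]` and look at the `n` images under `σ` of
the cyclic arcs `{t, t + 1, …, t + r - 1}` of `ℤ/n`. At most `r` of them lie in `F`: if the set
`S` of their starting points had more than `r` elements, its complement would have fewer than
`l = n - r` points, so some (shifted) residue class mod `l` misses it; this gives at most
`⌈n / l⌉ ≤ k` starting points in `S` spaced at most `l` apart around the cycle, and the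
corresponding `k` arcs have no common point. Averaging over `σ`, every `r`-set is the image of
a given arc equally often, whence `|F| n ≤ r C(n, r) = n C(n - 1, r - 1)`.
-/

open Finset
open scoped Nat Pointwise

theorem Nat.exists_le_mul_eq_add_lt {n k l : ℕ} (hl : 0 < l) (h : n ≤ k * l) :
    ∃ K ≤ k, ∃ m < l, K * l = n + m := by
  set q := (n + l - 1) / l
  have hdiv : q * l + (n + l - 1) % l = n + l - 1 := by rw [mul_comm]; exact Nat.div_add_mod _ _
  have hmod := Nat.mod_lt (n + l - 1) hl
  refine ⟨q, Nat.lt_succ_iff.mp (Nat.lt_of_mul_lt_mul_right (a := l) ?_), q * l - n, by omega,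
    by omega⟩
  rw [Nat.succ_mul]
  omega

theorem Nat.le_choose_pred_of_mul_le {n r c : ℕ} (hn : 0 < n) (h : c * n ≤ r * n.choose r) :
    c ≤ (n - 1).choose (r - 1) := by
  obtain ⟨n, rfl⟩ : ∃ n', n = n' + 1 := ⟨n - 1, by omega⟩
  rcases r with _ | r
  · simp at h
    simp [h]
  · rw [Nat.add_sub_cancel, Nat.add_sub_cancel]
    rw [mul_comm (r + 1), ← Nat.add_one_mul_choose_eq, mul_comm] at h
    exact Nat.le_of_mul_le_mul_left h hn

namespace Equiv.Perm

variable {α : Type*} [Fintype α] [DecidableEq α]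

theorem card_filter_smul_eq_of_card_eq {A B : Finset α} (h : #A = #B) :
    #{σ : Perm α | σ • B = A} = #{σ : Perm α | σ • B = B} := by
  have := Set.powersetCard.isPretransitive (α := α) (n := #B)
  obtain ⟨τ, hτ⟩ := MulAction.exists_smul_eq (Perm α)
    (Set.powersetCard.ofCard (rfl : #B = #B)) (Set.powersetCard.ofCard h)
  replace hτ : τ • B = A := congrArg Subtype.val hτ
  refine card_nbij' (τ⁻¹ * ·) (τ * ·) ?_ ?_ ?_ ?_ <;> intro σ hσ <;>
    simp_all [mul_smul, inv_smul_eq_iff]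

theorem card_filter_smul_mem {B : Finset α} {F : Finset (Finset α)} (hF : ∀ A ∈ F, #A = #B) :
    #{σ : Perm α | σ • B ∈ F} = #F * #{σ : Perm α | σ • B = B} := by
  rw [card_eq_sum_card_fiberwise (s := {σ : Perm α | σ • B ∈ F}) (f := (· • B)) (t := F)
      fun σ hσ => (mem_filter.mp hσ).2, ← smul_eq_mul, ← sum_const]
  refine sum_congr rfl fun A hA => ?_
  rw [← card_filter_smul_eq_of_card_eq (hF A hA), filter_filter]
  congr 1
  ext σ
  simp only [mem_filter, mem_univ, true_and, and_iff_right_iff_imp]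
  rintro rfl
  exact hA

theorem card_filter_smul_eq_self_mul_choose (B : Finset α) :
    #{σ : Perm α | σ • B = B} * (Fintype.card α).choose #B = (Fintype.card α)! := by
  have h := card_filter_smul_mem (B := B) (F := powersetCard #B univ)
    fun A hA => mem_powersetCard_univ.mp hA
  rw [card_powersetCard, Finset.card_univ, filter_true_of_mem
    fun σ _ => mem_powersetCard_univ.mpr (card_smul_finset σ B), Finset.card_univ,
    Fintype.card_perm] at h
  rw [h, mul_comm]

theorem card_mul_card_le_of_card_filter_smul_mem_le {ι : Type*} [Fintype ι] {r b : ℕ}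
    {C : ι → Finset α} (hC : ∀ i, #(C i) = r) {F : Finset (Finset α)} (hF : ∀ A ∈ F, #A = r)
    (hb : ∀ σ : Perm α, #{i | σ • C i ∈ F} ≤ b) :
    #F * Fintype.card ι ≤ b * (Fintype.card α).choose r := by
  set N := Fintype.card α
  have hfiber (i : ι) : #{σ : Perm α | σ • C i ∈ F} * N.choose r = #F * N ! := by
    rw [card_filter_smul_mem fun A hA => (hF A hA).trans (hC i).symm, mul_assoc, ← hC i,
      card_filter_smul_eq_self_mul_choose]
  have hswap : ∑ σ : Perm α, #{i | σ • C i ∈ F} = ∑ i, #{σ : Perm α | σ • C i ∈ F} := by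
    simp only [card_filter]
    exact sum_comm
  refine Nat.le_of_mul_le_mul_right (c := N !) ?_ (Nat.factorial_pos N)
  calc #F * Fintype.card ι * N ! = (∑ i, #{σ : Perm α | σ • C i ∈ F}) * N.choose r := by
        rw [sum_mul, sum_congr rfl fun i _ => hfiber i, sum_const, card_univ, smul_eq_mul,
          mul_right_comm, mul_comm (Fintype.card ι)]
    _ ≤ (∑ _σ : Perm α, b) * N.choose r := by
        rw [← hswap]
        exact Nat.mul_le_mul_right _ (sum_le_sum fun σ _ => hb σ)
    _ = b * N.choose r * N ! := by
        rw [sum_const, card_univ, Fintype.card_perm, smul_eq_mul]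
        ring

end Equiv.Perm

namespace Fin

open Fin.NatCast

variable {n : ℕ}

def arc (r : ℕ) (t : Fin n) : Finset (Fin n) := {x | (x - t).val < r}

theorem mem_arc {r : ℕ} {t x : Fin n} : x ∈ arc r t ↔ (x - t).val < r := by
  simp [arc]

theorem card_arc [NeZero n] {r : ℕ} (hr : r ≤ n) (t : Fin n) : #(arc r t) = r := by
  rw [card_nbij' (t := {y : Fin n | y.val < r}) (· - t) (· + t)
      (fun x hx => by simpa [arc] using hx) (fun y hy => by simpa [arc] using hy)
      (fun x _ => sub_add_cancel x t) (fun y _ => add_sub_cancel_right y t),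
    card_filter_val_lt, min_eq_right hr]

theorem val_sub_add_natCast [NeZero n] (x s : Fin n) {u : ℕ} (hu : u < n) :
    (x - (s + u)).val = if u ≤ (x - s).val then (x - s).val - u else n + (x - s).val - u := by
  have hcast : (u : Fin n).val = u := by rw [val_natCast, Nat.mod_eq_of_lt hu]
  rw [sub_add_eq_sub_sub, val_sub, hcast]
  split_ifs with h
  · rw [show n - u + (x - s).val = (x - s).val - u + n by omega, Nat.add_mod_right,
      Nat.mod_eq_of_lt (by omega)]
  · rw [Nat.mod_eq_of_lt (by omega)]
    omega

theorem exists_le_val_sub_of_gap_le [NeZero n] {l K : ℕ} {u : ℕ → ℕ} (hK : 0 < K)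
    (hlt : ∀ j < K, u j < n) (hgap : ∀ j, u (j + 1) ≤ u j + l)
    (hwrap : n + u 0 ≤ u (K - 1) + l) (s x : Fin n) :
    ∃ j < K, n - l ≤ (x - (s + u j)).val := by
  have hval := fun j (hj : j < K) => val_sub_add_natCast x s (hlt j hj)
  set y := (x - s).val
  by_cases hy : ∃ j, j < K ∧ y < u j
  · obtain ⟨hjK, hyj⟩ := Nat.find_spec hy
    have hjy : u (Nat.find hy) ≤ y + l := by
      rcases h : Nat.find hy with _ | i
      · have := hlt (K - 1) (by omega)
        omega
      · have hi : u i ≤ y := by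
          have := Nat.find_min hy (show i < Nat.find hy by omega)
          push Not at this
          exact this (by omega)
        have := hgap i
        omega
    refine ⟨Nat.find hy, hjK, ?_⟩
    rw [hval _ hjK, if_neg (by omega)]
    omega
  · push Not at hy
    have h0 := hy 0 hK
    have hlast := hy (K - 1) (by omega)
    refine ⟨0, hK, ?_⟩
    rw [hval 0 hK, if_pos h0]
    omega

theorem exists_forall_add_min_mem [NeZero n] {S : Finset (Fin n)} {s : Fin n} (hs : s ∈ S)
    {r l m : ℕ} (hn : n = r + l) (hS : #Sᶜ < l) (hlrm : l ∣ r + m) :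
    ∃ a < l, ∀ j, s + ((min (a + j * l - m) (a + r) : ℕ) : Fin n) ∈ S := by
  -- Pigeonhole: some residue class mod `l` of the shifted offsets from `s` avoids `Sᶜ`.
  obtain ⟨a, ha, haS⟩ := exists_mem_notMem_of_card_lt_card
    (s := Sᶜ.image fun p => ((p - s).val + m) % l) (t := range l)
    (card_image_le.trans_lt (hS.trans_eq (card_range l).symm))
  rw [mem_range] at ha
  refine ⟨a, ha, fun j => ?_⟩
  set u := min (a + j * l - m) (a + r)
  by_contra hj
  have hu0 : u ≠ 0 := by
    intro h
    rw [h, Nat.cast_zero, add_zero] at hj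
    exact hj hs
  obtain ⟨i, hi⟩ : ∃ i, u + m = a + l * i := by
    obtain ⟨c, hc⟩ := hlrm
    rcases min_choice (a + j * l - m) (a + r) with h | h
    · exact ⟨j, by rw [mul_comm]; omega⟩
    · exact ⟨c, by omega⟩
  refine haS (mem_image.mpr ⟨s + u, mem_compl.mpr hj, ?_⟩)
  rw [add_sub_cancel_left, val_natCast, Nat.mod_eq_of_lt (show u < n by omega), hi,
    Nat.add_mul_mod_self_left, Nat.mod_eq_of_lt ha]

theorem card_le_of_forall_exists_forall_mem_arc [NeZero n] {r k : ℕ} (hk : 0 < k)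
    (hkr : k * r ≤ (k - 1) * n) {S : Finset (Fin n)}
    (hS : ∀ a : Fin k → Fin n, (∀ i, a i ∈ S) → ∃ x, ∀ i, x ∈ arc r (a i)) :
    #S ≤ r := by
  by_contra! hS_card
  obtain ⟨s, hs⟩ := card_pos.mp (hS_card.trans_le' (Nat.zero_le r))
  have hrn : r < n := hS_card.trans_le ((card_le_univ S).trans_eq (Fintype.card_fin n))
  obtain ⟨l, hl⟩ : ∃ l, n = r + l := ⟨n - r, by omega⟩
  have hnl : n ≤ k * l := by
    have : (k - 1) * n + n = k * r + k * l := by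
      rw [← Nat.add_one_mul, ← Nat.mul_add, ← hl, Nat.sub_add_cancel hk]
    omega
  obtain ⟨K, hKk, m, hml, hKm⟩ := Nat.exists_le_mul_eq_add_lt (by omega) hnl
  have hKl : K * l - l = r + m := by omega
  have hkl : K * l ≤ (k - 1) * l + l := by
    rw [← Nat.add_one_mul, Nat.sub_add_cancel hk]
    exact Nat.mul_le_mul_right l hKk
  obtain ⟨a, ha, hmem⟩ := exists_forall_add_min_mem (m := m) hs hl
    (by rw [card_compl, Fintype.card_fin]; omega)
    ⟨K - 1, by rw [Nat.mul_sub_one, mul_comm]; omega⟩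
  obtain ⟨x, hx⟩ := hS (fun i => s + (min (a + i * l - m) (a + r) : ℕ)) fun i => hmem i
  obtain ⟨j, hj, hjx⟩ := exists_le_val_sub_of_gap_le (u := fun j => min (a + j * l - m) (a + r))
    (l := l) hk (fun j _ => by omega) (fun j => by rw [Nat.succ_mul]; omega)
    (by omega) s x
  have : (x - (s + (min (a + j * l - m) (a + r) : ℕ))).val < r := mem_arc.mp (hx ⟨j, hj⟩)
  omega

end Fin

/-- Frankl's theorem: a `k`-wise intersecting family of `r`-subsets of `[n]`
with `r ≤ (k-1)n/k` has size at most `C(n-1, r-1)`. -/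
theorem frankl_kwise_intersecting (n r k : ℕ) (hk : 2 ≤ k)
    (F : Finset (Finset (Fin n)))
    (hcard : ∀ A ∈ F, A.card = r)
    (hkw : ∀ f : Fin k → Finset (Fin n), (∀ i, f i ∈ F) → ∃ v, ∀ i, v ∈ f i)
    (hr : k * r ≤ (k - 1) * n) :
    F.card ≤ (n - 1).choose (r - 1) := by
  classical
  rcases Nat.eq_zero_or_pos n with rfl | hn
  · have hF : F = ∅ := eq_empty_of_forall_notMem fun A hA =>
      (hkw (fun _ => A) fun _ => hA).elim fun v _ => v.elim0
    simp [hF]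
  have : NeZero n := ⟨hn.ne'⟩
  have hrn : r < n := Nat.lt_of_mul_lt_mul_left
    (hr.trans_lt (Nat.mul_lt_mul_of_pos_right (by omega) hn))
  have hcycle (σ : Equiv.Perm (Fin n)) : #{t | σ • Fin.arc r t ∈ F} ≤ r := by
    refine Fin.card_le_of_forall_exists_forall_mem_arc (by omega) hr fun t ht => ?_
    obtain ⟨v, hv⟩ := hkw (fun i => σ • Fin.arc r (t i)) fun i => (mem_filter.mp (ht i)).2
    exact ⟨σ⁻¹ • v, fun i => inv_smul_mem_iff.mpr (hv i)⟩
  have hcount := Equiv.Perm.card_mul_card_le_of_card_filter_smul_mem_le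
    (fun t => Fin.card_arc hrn.le t) hcard hcycle
  rw [Fintype.card_fin] at hcount
  exact Nat.le_choose_pred_of_mul_le hn hcount
end

section
/- Let σ be a cyclic order on [n] and let F be a k-wise intersecting family of intervals of length r in σ, where r ≤ (k-1)n/k. Then |F| ≤ r. -/
/-!
Let `S` be the set of starting points of the intervals in `F`; if `|F| > r`, fewer than
`L = n - r` points of the circle lie outside `S`. The interval starting at `t` misses `q` exactly
when `t - q ∈ [1, L]`, so it suffices to find `k` points of `S` whose cyclic gaps are at most `L`.
Fix `s₀ ∈ S`, put `m = k L - n ≥ 0`, and take the points `s₀ + max 0 (a + j L - m)` for `j < k`: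
steps of `L` ending at `s₀ + a + n - L`, with every term that would fall before `s₀` collapsed
onto `s₀`, so the gap closing the circle is at most `L` as well. A point outside `S` lies on this
progression for only one offset `a` mod `L`; as there are fewer than `L` such points, some
`a < L` puts all `k` points in `S`.
-/

open Finset

/-- The `σ`-interval of length `r` starting at position `x` in the cyclic order `σ`. -/
def cInterval (n r : ℕ) (σ : ZMod n ≃ Fin n) (x : ZMod n) : Finset (Fin n) :=
  (Finset.range r).image (fun (i : ℕ) => σ (x + (i : ZMod n)))

theorem Finset.exists_lt_forall_ne_of_card_lt {α : Type*} {s : Finset α} {L : ℕ} (f : α → ℕ)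
    (h : #s < L) : ∃ a < L, ∀ x ∈ s, f x ≠ a := by
  classical
  obtain ⟨a, haL, has⟩ := exists_mem_notMem_of_card_lt_card (s := s.image f) (t := range L)
    (by simpa using card_image_le.trans_lt h)
  exact ⟨a, mem_range.1 haL, fun x hx hxa => has (hxa ▸ mem_image_of_mem f hx)⟩

/-- If points `p 0, …, p (K - 1)` on a circle of length `n` advance by at most `L` at each step,
including the step from `p (K - 1)` back around to `p 0`, then every `u` has one of them ahead of
it by at least `1` and at most `L`, possibly after going once around. -/
theorem Nat.exists_ahead_of_gaps_le {n L K : ℕ} {p : ℕ → ℕ} (hK : 0 < K) (h0 : p 0 ≤ L)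
    (hstep : ∀ j, j + 1 < K → p (j + 1) ≤ p j + L) (hwrap : p 0 + n ≤ p (K - 1) + L) (u : ℕ) :
    ∃ j < K, u < p j ∧ p j ≤ u + L ∨ p j + n ≤ u + L := by
  classical
  by_cases hpast : ∃ j, j < K ∧ u < p j
  · obtain ⟨hjK, hju⟩ := Nat.find_spec hpast
    refine ⟨_, hjK, Or.inl ⟨hju, ?_⟩⟩
    rcases hj : Nat.find hpast with _ | i
    · omega
    · have hprev : ¬ (i < K ∧ u < p i) := Nat.find_min hpast (by omega)
      have := hstep i (by omega)
      omega
  · push Not at hpast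
    have := hpast (K - 1) (by omega)
    exact ⟨0, hK, Or.inr (by omega)⟩

section Circle

variable {n : ℕ} [NeZero n]

theorem ZMod.val_sub_of_lt {x y : ZMod n} (h : x.val < y.val) :
    (x - y).val = x.val + n - y.val := by
  rcases lt_or_ge ((x - y).val + y.val) n with hlt | hge
  · have := ZMod.val_add_of_lt hlt
    rw [sub_add_cancel] at this
    omega
  · have := ZMod.val_add_of_le hge
    rw [sub_add_cancel] at this
    omega

theorem ZMod.sub_le_val_sub {x y : ZMod n} {L : ℕ}
    (h : x.val < y.val ∧ y.val ≤ x.val + L ∨ y.val + n ≤ x.val + L) : n - L ≤ (x - y).val := by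
  have := x.val_lt
  rcases le_or_gt y.val x.val with hle | hlt
  · rw [ZMod.val_sub hle]
    omega
  · rw [ZMod.val_sub_of_lt hlt]
    omega

theorem mem_cInterval_iff {r : ℕ} {σ : ZMod n ≃ Fin n} {x : ZMod n} {p : Fin n} :
    p ∈ cInterval n r σ x ↔ (σ.symm p - x).val < r := by
  simp only [cInterval, mem_image, mem_range, ← Equiv.eq_symm_apply]
  constructor
  · rintro ⟨i, hi, hip⟩
    rw [← hip, add_sub_cancel_left, ZMod.val_natCast]
    exact (Nat.mod_le i n).trans_lt hi
  · intro h
    exact ⟨_, h, by rw [ZMod.natCast_zmod_val, add_sub_cancel]⟩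

theorem card_le_card_filter_cInterval_mem {r : ℕ} {σ : ZMod n ≃ Fin n}
    {F : Finset (Finset (Fin n))} (hF : ∀ A ∈ F, ∃ x, A = cInterval n r σ x) :
    #F ≤ #{x | cInterval n r σ x ∈ F} :=
  calc #F ≤ #(({x | cInterval n r σ x ∈ F} : Finset (ZMod n)).image (cInterval n r σ)) :=
        card_le_card fun A hA => by
          obtain ⟨x, rfl⟩ := hF A hA
          exact mem_image_of_mem _ (mem_filter.2 ⟨mem_univ x, hA⟩)
    _ ≤ _ := card_image_le

theorem exists_seq_mem_forall_exists_le_val_sub {S : Finset (ZMod n)} {r K : ℕ}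
    (hS : r < #S) (hK : n ≤ K * (n - r)) :
    ∃ t : ℕ → ZMod n, (∀ j < K, t j ∈ S) ∧ ∀ q, ∃ j < K, r ≤ (q - t j).val := by
  obtain ⟨L, hL⟩ : ∃ L, n - r = L := ⟨_, rfl⟩
  rw [hL] at hK
  have hSn : #S ≤ n := (card_le_univ S).trans_eq (ZMod.card n)
  have hKpos : 0 < K := Nat.pos_of_ne_zero fun h => NeZero.ne n (by simp_all)
  obtain ⟨s₀, hs₀⟩ : S.Nonempty := card_pos.1 (by omega)
  obtain ⟨m, hm⟩ : ∃ m, K * L - n = m := ⟨_, rfl⟩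
  obtain ⟨a, haL, hfree⟩ := Sᶜ.exists_lt_forall_ne_of_card_lt (L := L)
    (fun c => (m + (c - s₀).val) % L) (by rw [card_compl, ZMod.card]; omega)
  have hO_lt : ∀ j < K, a + j * L - m < n := fun j hj => by
    have : j * L ≤ (K - 1) * L := Nat.mul_le_mul_right L (by omega)
    rw [Nat.sub_mul, one_mul] at this
    omega
  have hO_val : ∀ j < K, ((a + j * L - m : ℕ) : ZMod n).val = a + j * L - m :=
    fun j hj => ZMod.val_cast_of_lt (hO_lt j hj)
  -- The truncated subtraction `a + j * L - m` is the `max 0 (a + j L - m)` of the construction.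
  refine ⟨fun j => s₀ + (a + j * L - m : ℕ), fun j hj => ?_, fun q => ?_⟩
  · by_cases hOj : a + j * L - m = 0
    · simpa [hOj] using hs₀
    by_contra hjS
    apply hfree _ (mem_compl.2 hjS)
    rw [add_sub_cancel_left, hO_val j hj, show m + (a + j * L - m) = a + j * L by omega,
      Nat.add_mul_mod_self_right, Nat.mod_eq_of_lt haL]
  · have hwrap : a + (K - 1) * L - m = a + n - L := by
      rw [Nat.sub_mul, one_mul]
      omega
    obtain ⟨j, hj, hjq⟩ := Nat.exists_ahead_of_gaps_le (n := n) (L := L)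
      (p := fun j => a + j * L - m) (u := (q - s₀).val) hKpos (by omega)
      (fun j _ => by simp only [add_one_mul]; omega)
      (by simp only [zero_mul, add_zero, hwrap]; omega)
    refine ⟨j, hj, (show r = n - L by omega) ▸ ?_⟩
    rw [show q - (s₀ + _) = (q - s₀) - ((a + j * L - m : ℕ) : ZMod n) by ring]
    exact ZMod.sub_le_val_sub (by rwa [hO_val j hj])

end Circle

/-- Frankl's circle lemma: a `k`-wise intersecting family of intervals of length
`r ≤ (k-1)n/k` in a cyclic order on `[n]` has at most `r` members. -/
theorem kwise_intersecting_intervals (n r k : ℕ) (hk : 2 ≤ k) (hn : 0 < n)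
    (σ : ZMod n ≃ Fin n) (F : Finset (Finset (Fin n)))
    (hint : ∀ A ∈ F, ∃ x : ZMod n, A = cInterval n r σ x)
    (hkw : ∀ f : Fin k → Finset (Fin n), (∀ i, f i ∈ F) → ∃ v, ∀ i, v ∈ f i)
    (hr : k * r ≤ (k - 1) * n) :
    F.card ≤ r := by
  have : NeZero n := ⟨hn.ne'⟩
  by_contra! hF
  have hkL : n ≤ k * (n - r) := by
    have := Nat.le_mul_of_pos_left n (by omega : 0 < k)
    rw [Nat.sub_mul, one_mul] at hr
    rw [Nat.mul_sub]
    omega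
  have hS := hF.trans_le (card_le_card_filter_cInterval_mem hint)
  obtain ⟨t, htS, hfar⟩ := exists_seq_mem_forall_exists_le_val_sub hS hkL
  obtain ⟨v, hv⟩ := hkw (fun i => cInterval n r σ (t i)) fun i => (mem_filter.1 (htS i i.2)).2
  obtain ⟨j, hj, hjv⟩ := hfar (σ.symm v)
  exact hjv.not_gt (mem_cInterval_iff.1 (hv ⟨j, hj⟩))
end

section
/- Let σ be a cyclic order on [n] and let F be a k-wise intersecting family of intervals of length r in σ, where r < (k-1)n/k. If |F| = r, then there is a position x such that F consists exactly of the r intervals of length r containing the point x. -/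
open Finset

namespace KWI

lemma cast_inj_of_lt {n : ℕ} [NeZero n] {a b : ℕ} (ha : a < n) (hb : b < n)
    (h : (a : ZMod n) = b) : a = b := by
  have h1 := ZMod.val_cast_of_lt (n := n) ha
  have h2 := ZMod.val_cast_of_lt (n := n) hb
  rw [← h1, ← h2, h]

lemma addcast_inj {n : ℕ} [NeZero n] {z : ZMod n} {a b : ℕ} (ha : a < n) (hb : b < n)
    (h : z + (a : ZMod n) = z + b) : a = b :=
  cast_inj_of_lt ha hb (by exact add_left_cancel h)

lemma subcast_inj {n : ℕ} [NeZero n] {z : ZMod n} {a b : ℕ} (ha : a < n) (hb : b < n)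
    (h : z - (a : ZMod n) = z - b) : a = b := by
  apply cast_inj_of_lt ha hb
  have ha' : (a : ZMod n) = z - (z - (a : ZMod n)) := (sub_sub_cancel z _).symm
  rw [ha', h, sub_sub_cancel]

open scoped Classical in
noncomputable def Dback (n L : ℕ) (T : Finset (ZMod n)) (τ : ZMod n) : ℕ :=
  if h : ∃ j, τ - (((j + 1) * L : ℕ) : ZMod n) ∈ T then Nat.find h + 1 else 0

open scoped Classical in
noncomputable def offT (n : ℕ) (T : Finset (ZMod n)) (τ : ZMod n) : ℕ :=
  if h : ∃ j, τ - (((j + 1) : ℕ) : ZMod n) ∉ T then Nat.find h else 0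


section Specs
variable {n L : ℕ} [NeZero n] {T : Finset (ZMod n)} {τ : ZMod n}

lemma npos : 0 < n := Nat.pos_of_ne_zero (NeZero.ne n)

lemma nL_cast_zero : (((n * L : ℕ)) : ZMod n) = 0 := by
  push_cast [ZMod.natCast_self]; ring

lemma Dback_exists (hτ : τ ∈ T) : ∃ j, τ - (((j + 1) * L : ℕ) : ZMod n) ∈ T := by
  refine ⟨n - 1, ?_⟩
  have h1 : (n - 1 + 1) * L = n * L := by
    have := npos (n := n); congr 1; omega
  rw [h1, nL_cast_zero, sub_zero]; exact hτ

lemma Dback_eq (hτ : τ ∈ T) :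
    Dback n L T τ = Nat.find (Dback_exists (L := L) hτ) + 1 := by
  rw [Dback]
  split
  · rename_i h; congr 1
  · rename_i h; exact absurd (Dback_exists (L := L) hτ) h

lemma Dback_pos (hτ : τ ∈ T) : 1 ≤ Dback n L T τ := by
  rw [Dback_eq hτ]; omega

lemma Dback_mem (hτ : τ ∈ T) : τ - ((Dback n L T τ * L : ℕ) : ZMod n) ∈ T := by
  have := Nat.find_spec (Dback_exists (L := L) hτ)
  rw [Dback_eq hτ]; exact this

lemma Dback_notMem (hτ : τ ∈ T) {i : ℕ} (h1 : 1 ≤ i) (h2 : i < Dback n L T τ) :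
    τ - ((i * L : ℕ) : ZMod n) ∉ T := by
  have := Nat.find_min (Dback_exists (L := L) hτ) (m := i - 1) (by rw [Dback_eq hτ] at h2; omega)
  have hi : i - 1 + 1 = i := by omega
  rwa [hi] at this

lemma offT_exists (hτ : τ ∈ T) (hz : ∃ z, z ∉ T) :
    ∃ j, τ - (((j + 1) : ℕ) : ZMod n) ∉ T := by
  obtain ⟨z, hz⟩ := hz
  have hne : τ ≠ z := fun h => hz (h ▸ hτ)
  have hv : 1 ≤ (τ - z).val := by
    rcases Nat.eq_zero_or_pos (τ - z).val with h | h
    · exfalso; apply hne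
      have h0 : τ - z = 0 := by
        have := (ZMod.val_eq_zero (τ - z)).mp h
        exact this
      exact sub_eq_zero.mp h0
    · exact h
  refine ⟨(τ - z).val - 1, ?_⟩
  have h2 : ((τ - z).val - 1 + 1 : ℕ) = (τ - z).val := by omega
  rw [h2]
  have h3 : (((τ - z).val : ℕ) : ZMod n) = τ - z := by
    rw [ZMod.natCast_val, ZMod.cast_id]
  rw [h3, sub_sub_cancel]
  exact hz

lemma offT_eq (hτ : τ ∈ T) (hz : ∃ z, z ∉ T) :
    offT n T τ = Nat.find (offT_exists hτ hz) := by
  rw [offT]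
  split
  · rename_i h; congr 1
  · rename_i h; exact absurd (offT_exists hτ hz) h

lemma offT_notMem (hτ : τ ∈ T) (hz : ∃ z, z ∉ T) :
    τ - (((offT n T τ + 1) : ℕ) : ZMod n) ∉ T := by
  rw [offT_eq hτ hz]; exact Nat.find_spec (offT_exists hτ hz)

lemma offT_mem (hτ : τ ∈ T) (hz : ∃ z, z ∉ T) {i : ℕ} (h : i ≤ offT n T τ) :
    τ - ((i : ℕ) : ZMod n) ∈ T := by
  rcases Nat.eq_zero_or_pos i with h0 | h0
  · subst h0; simpa using hτ
  · by_contra hc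
    have := Nat.find_min' (offT_exists hτ hz) (m := i - 1) (by
      have hi : i - 1 + 1 = i := by omega
      rw [hi]; exact hc)
    rw [← offT_eq hτ hz] at this
    omega

end Specs

theorem core (n L k : ℕ) [NeZero n] (hL1 : 0 < L) (hLn : L + 1 ≤ n) (hkL : n < k * L)
    (T : Finset (ZMod n)) (hTcard : T.card = L)
    (hNC : ∀ (x : ZMod n) (t : ℕ) (o : ℕ → ℕ), t + 1 ≤ k → o 0 = 0 →
      (∀ i, i < t → o (i + 1) ≤ o i + L) → (∀ i, i ≤ t → o i ≤ n - 1) → n - L ≤ o t →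
      ∃ i, i ≤ t ∧ (x + (o i : ZMod n)) ∈ T) :
    ∃ c : ZMod n, T = (Finset.range L).image (fun (j : ℕ) => c + (j : ZMod n)) := by
  classical
  have hn0 : 0 < n := npos
  set t₁ := (n - 1) / L with ht₁def
  have ht₁L : t₁ * L ≤ n - 1 := Nat.div_mul_le_self _ _
  have ht₁L' : n ≤ t₁ * L + L := by
    have h1 : L * t₁ + (n - 1) % L = n - 1 := Nat.div_add_mod _ _
    have h2 : (n - 1) % L < L := Nat.mod_lt _ hL1
    rw [mul_comm]; omega
  have ht₁k : t₁ + 1 ≤ k := by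
    have : t₁ < k := (Nat.div_lt_iff_lt_mul hL1).mpr (by omega)
    omega
  have ht₁1 : 1 ≤ t₁ := (Nat.one_le_div_iff hL1).mpr (by omega)
  -- the basic hitting fact
  have hit : ∀ x : ZMod n, ∃ j, j ≤ t₁ ∧ x + ((j * L : ℕ) : ZMod n) ∈ T := by
    intro x
    obtain ⟨i, hi, hm⟩ := hNC x t₁ (fun i => i * L) (by omega) (by simp)
      (fun i _ => by simp [add_mul])
      (fun i hi => le_trans (Nat.mul_le_mul_right L hi) ht₁L)
      (by show n - L ≤ t₁ * L; omega)
    exact ⟨i, hi, hm⟩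
  have keyc : ∀ (z : ZMod n) (a b : ℕ), b ≤ a →
      z - ((a * L : ℕ) : ZMod n) + ((b * L : ℕ) : ZMod n) = z - (((a - b) * L : ℕ) : ZMod n) := by
    intro z a b hba
    have h1 : ((a - b) * L : ℕ) = a * L - b * L := Nat.sub_mul a b L
    rw [h1, Nat.cast_sub (Nat.mul_le_mul_right L hba)]
    ring
  have hβex : ∀ x : ZMod n, ∃ j, x + ((j * L : ℕ) : ZMod n) ∈ T := fun x => by
    obtain ⟨j, _, h⟩ := hit x; exact ⟨j, h⟩
  set β : ZMod n → ℕ := fun x => Nat.find (hβex x) with hβdef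
  have hβmem : ∀ x, x + ((β x * L : ℕ) : ZMod n) ∈ T := fun x => Nat.find_spec (hβex x)
  have hβle : ∀ x, β x ≤ t₁ := fun x => by
    obtain ⟨j, hj, h⟩ := hit x; exact le_trans (Nat.find_min' _ h) hj
  have hβmin : ∀ x j, j < β x → x + ((j * L : ℕ) : ZMod n) ∉ T :=
    fun x j h => Nat.find_min (hβex x) h
  have hDle : ∀ τ ∈ T, Dback n L T τ ≤ t₁ + 1 := by
    intro τ hτ
    obtain ⟨j, hj, hm⟩ := hit (τ - (((t₁ + 1) * L : ℕ) : ZMod n))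
    rw [keyc τ (t₁ + 1) j (by omega)] at hm
    by_contra hc
    push_neg at hc
    exact Dback_notMem hτ (i := t₁ + 1 - j) (by omega) (by omega) hm
  -- fiber counting
  have hfibcard : ∀ τ ∈ T,
      (univ.filter (fun x => x + ((β x * L : ℕ) : ZMod n) = τ)).card = Dback n L T τ := by
    intro τ hτ
    have hset : univ.filter (fun x => x + ((β x * L : ℕ) : ZMod n) = τ)
        = (range (Dback n L T τ)).image (fun a => τ - ((a * L : ℕ) : ZMod n)) := by
      ext x
      simp only [mem_filter, mem_univ, true_and, mem_image, mem_range]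
      constructor
      · intro hx
        refine ⟨β x, ?_, ?_⟩
        · by_contra hge
          push_neg at hge
          have hD1 := Dback_pos (L := L) hτ
          set bx := β x with hbxdef
          have hx' : x = τ - ((bx * L : ℕ) : ZMod n) := by rw [← hx]; ring
          have h2 : x + (((bx - Dback n L T τ) * L : ℕ) : ZMod n) ∈ T := by
            rw [hx', keyc τ bx (bx - Dback n L T τ) (by omega)]
            have h4 : bx - (bx - Dback n L T τ) = Dback n L T τ := by omega
            rw [h4]; exact Dback_mem hτ
          exact hβmin x _ (by omega) h2
        · rw [← hx]; ring
      · rintro ⟨a, ha, rfl⟩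
        have hmem : τ - ((a * L : ℕ) : ZMod n) + ((a * L : ℕ) : ZMod n) = τ := by ring
        have hβa : β (τ - ((a * L : ℕ) : ZMod n)) = a := by
          have hle : β (τ - ((a * L : ℕ) : ZMod n)) ≤ a :=
            Nat.find_min' _ (by rw [hmem]; exact hτ)
          rcases Nat.lt_or_ge (β (τ - ((a * L : ℕ) : ZMod n))) a with hlt | hge
          · exfalso
            have h6 := hβmem (τ - ((a * L : ℕ) : ZMod n))
            rw [keyc τ a _ (le_of_lt hlt)] at h6
            exact Dback_notMem hτ (by omega) (by omega) h6
          · omega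
        rw [hβa, hmem]
    rw [hset, Finset.card_image_of_injOn, Finset.card_range]
    intro a ha b hb hab
    simp only [mem_coe, mem_range] at ha hb
    have hD := hDle τ hτ
    have h7 : a * L = b * L := by
      refine subcast_inj (z := τ) ?_ ?_ hab
      · have : a * L ≤ t₁ * L := Nat.mul_le_mul_right L (by omega)
        omega
      · have : b * L ≤ t₁ * L := Nat.mul_le_mul_right L (by omega)
        omega
    exact Nat.eq_of_mul_eq_mul_right hL1 h7
  have hsum : ∑ τ ∈ T, Dback n L T τ = n := by
    have hmaps : ∀ x ∈ (univ : Finset (ZMod n)), x + ((β x * L : ℕ) : ZMod n) ∈ T :=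
      fun x _ => hβmem x
    have hcf := Finset.card_eq_sum_card_fiberwise hmaps
    rw [Finset.card_univ] at hcf
    have hcard : Fintype.card (ZMod n) = n := ZMod.card n
    rw [hcard] at hcf
    exact (hcf.trans (Finset.sum_congr rfl hfibcard)).symm
  have keyd : ∀ (z : ZMod n) (a b : ℕ), b ≤ a →
      z - ((a : ℕ) : ZMod n) + ((b : ℕ) : ZMod n) = z - (((a - b) : ℕ) : ZMod n) := by
    intro z a b h
    rw [Nat.cast_sub h]; ring
  have e2 : (t₁ - 1) * L + L = t₁ * L := by
    have h9 : t₁ - 1 + 1 = t₁ := by omega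
    calc (t₁ - 1) * L + L = (t₁ - 1 + 1) * L := by ring
      _ = t₁ * L := by rw [h9]
  set s' := n - t₁ * L with hs'def
  have hs'1 : 1 ≤ s' := by omega
  have hs'L : s' ≤ L := by omega
  have hk2 : t₁ + 2 ≤ k ∨ s' < L := by
    rcases Nat.lt_or_ge (t₁ + 1) k with h | h
    · exact Or.inl (by omega)
    · right
      by_contra hc
      push_neg at hc
      have hs'E : s' = L := le_antisymm hs'L hc
      have hkt : k ≤ t₁ + 1 := h
      have : k * L ≤ (t₁ + 1) * L := Nat.mul_le_mul_right L hkt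
      have e3 : (t₁ + 1) * L = t₁ * L + L := by ring
      omega
  -- the single-bend rule: for "deep" τ, the interval [τ-(L-s'), τ] is inside T
  have hdeepInt : ∀ τ ∈ T, Dback n L T τ = t₁ + 1 → ∀ i, i ≤ L - s' → τ - ((i : ℕ) : ZMod n) ∈ T := by
    intro τ hτ hD i hiLs
    rcases Nat.eq_zero_or_pos i with h0 | h0
    · subst h0; simpa using hτ
    set a := L - i with hadef
    have haS : s' ≤ a := by omega
    have haL : a ≤ L - 1 := by omega
    set o : ℕ → ℕ := fun j => if j ≤ t₁ - 1 then j * L else (t₁ - 1) * L + a with hodef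
    obtain ⟨i', hi', hm⟩ := hNC (τ - ((t₁ * L : ℕ) : ZMod n)) t₁ o ht₁k
      (by simp [hodef])
      (by
        intro j hj
        simp only [hodef]
        rcases Nat.lt_or_ge (j + 1) t₁ with h1 | h1
        · rw [if_pos (by omega), if_pos (by omega)]
          have : (j + 1) * L = j * L + L := by ring
          omega
        · have hj1 : j + 1 = t₁ := by omega
          rw [if_neg (by omega), if_pos (by omega)]
          have : j * L = (t₁ - 1) * L := by rw [show j = t₁ - 1 by omega]
          omega)
      (by
        intro j hj
        simp only [hodef]
        split
        · rename_i h
          have : j * L ≤ t₁ * L := Nat.mul_le_mul_right L (by omega)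
          omega
        · omega)
      (by
        simp only [hodef, if_neg (by omega : ¬ t₁ ≤ t₁ - 1)]
        omega)
    rcases Nat.lt_or_ge i' t₁ with hlt | hge
    · exfalso
      have hio : o i' = i' * L := by simp only [hodef]; rw [if_pos (by omega)]
      rw [hio, keyc τ t₁ i' (by omega)] at hm
      exact Dback_notMem hτ (i := t₁ - i') (by omega) (by omega) hm
    · have hieq : i' = t₁ := le_antisymm hi' hge
      subst hieq
      have hio : o t₁ = (t₁ - 1) * L + a := by
        simp only [hodef]; rw [if_neg (by omega)]
      rw [hio] at hm
      have hcast : τ - ((t₁ * L : ℕ) : ZMod n) + (((t₁ - 1) * L + a : ℕ) : ZMod n)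
          = τ - ((i : ℕ) : ZMod n) := by
        have h10 : ((t₁ - 1) * L + a : ℕ) = t₁ * L - i := by omega
        rw [h10, Nat.cast_sub (by omega)]
        ring
      rwa [hcast] at hm
  -- existence of non-elements
  have hz : ∃ z : ZMod n, z ∉ T := by
    by_contra hc
    push_neg at hc
    have : (univ : Finset (ZMod n)) ⊆ T := fun z _ => hc z
    have hcd := Finset.card_le_card this
    rw [Finset.card_univ, ZMod.card n, hTcard] at hcd
    omega
  by_cases hBL : s' = L
  · -- Branch B : L ∣ n; every τ is deep
    have ht₁k2 : t₁ + 2 ≤ k := by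
      rcases hk2 with h | h
      · exact h
      · omega
    have hall : ∀ τ ∈ T, Dback n L T τ = t₁ + 1 := by
      by_contra hc
      push_neg at hc
      obtain ⟨τ₀, hτ₀, hne⟩ := hc
      have hlt : ∑ τ ∈ T, Dback n L T τ < ∑ τ ∈ T, (t₁ + 1) :=
        Finset.sum_lt_sum (fun τ hτ => hDle τ hτ)
          ⟨τ₀, hτ₀, lt_of_le_of_ne (hDle τ₀ hτ₀) hne⟩
      rw [hsum, Finset.sum_const, smul_eq_mul, hTcard] at hlt
      have e3 : L * (t₁ + 1) = t₁ * L + L := by ring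
      omega
    -- double-bend rule
    have hrule : ∀ τ ∈ T, ∀ a c : ℕ, 1 ≤ a → a ≤ L - 1 → c ≤ a →
        (τ - ((L - a : ℕ) : ZMod n) ∈ T ∨ τ + ((c : ℕ) : ZMod n) ∈ T) := by
      intro τ hτ a c ha1 haL hca
      set b := L - a + c with hbdef
      set o : ℕ → ℕ := fun j =>
        if j ≤ t₁ - 1 then j * L else (if j = t₁ then (t₁ - 1) * L + a else (t₁ - 1) * L + a + b)
        with hodef
      obtain ⟨i', hi', hm⟩ := hNC (τ - ((t₁ * L : ℕ) : ZMod n)) (t₁ + 1) o (by omega)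
        (by simp [hodef])
        (by
          intro j hj
          simp only [hodef]
          rcases Nat.lt_or_ge (j + 1) t₁ with h1 | h1
          · rw [if_pos (by omega), if_pos (by omega)]
            have : (j + 1) * L = j * L + L := by ring
            omega
          · rcases Nat.lt_or_ge j t₁ with h2 | h2
            · have hj1 : j + 1 = t₁ := by omega
              rw [if_neg (by omega), if_pos hj1, if_pos (by omega)]
              have : j * L = (t₁ - 1) * L := by rw [show j = t₁ - 1 by omega]
              omega
            · have hj2 : j = t₁ := by omega
              rw [if_neg (by omega), if_neg (by omega), if_neg (by omega), if_pos hj2]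
              omega)
        (by
          intro j hj
          simp only [hodef]
          split
          · rename_i h
            have : j * L ≤ t₁ * L := Nat.mul_le_mul_right L (by omega)
            omega
          · split
            · omega
            · omega)
        (by
          simp only [hodef, if_neg (by omega : ¬ t₁ + 1 ≤ t₁ - 1),
            if_neg (by omega : ¬ t₁ + 1 = t₁)]
          omega)
      rcases Nat.lt_or_ge i' t₁ with hlt | hge
      · exfalso
        have hio : o i' = i' * L := by simp only [hodef]; rw [if_pos (by omega)]
        rw [hio, keyc τ t₁ i' (by omega)] at hm
        have hD := hall τ hτ
        exact Dback_notMem hτ (i := t₁ - i') (by omega) (by omega) hm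
      · rcases eq_or_lt_of_le hge with hieq | hgt
        · left
          have hio : o t₁ = (t₁ - 1) * L + a := by
            simp only [hodef]
            rw [if_neg (show ¬ t₁ ≤ t₁ - 1 by omega)]
            simp
          rw [← hieq, hio] at hm
          have hcast : τ - ((t₁ * L : ℕ) : ZMod n) + (((t₁ - 1) * L + a : ℕ) : ZMod n)
              = τ - ((L - a : ℕ) : ZMod n) := by
            have h10 : ((t₁ - 1) * L + a : ℕ) = t₁ * L - (L - a) := by omega
            rw [h10, Nat.cast_sub (by omega)]
            ring
          rwa [hcast] at hm
        · right
          have hieq : i' = t₁ + 1 := by omega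
          subst hieq
          have hio : o (t₁ + 1) = (t₁ - 1) * L + a + b := by
            simp only [hodef]
            rw [if_neg (show ¬ t₁ + 1 ≤ t₁ - 1 by omega),
              if_neg (show ¬ t₁ + 1 = t₁ by omega)]
          rw [hio] at hm
          have hcast : τ - ((t₁ * L : ℕ) : ZMod n) + (((t₁ - 1) * L + a + b : ℕ) : ZMod n)
              = τ + ((c : ℕ) : ZMod n) := by
            have h10 : ((t₁ - 1) * L + a + b : ℕ) = t₁ * L + c := by omega
            rw [h10]
            push_cast
            ring
          rwa [hcast] at hm
    -- finale for branch B
    obtain ⟨τ, hτ⟩ := Finset.card_pos.mp (by omega : 0 < T.card)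
    by_cases hup : ∀ a : ℕ, a ≤ L - 1 → τ + ((a : ℕ) : ZMod n) ∈ T
    · refine ⟨τ, ?_⟩
      symm
      apply Finset.eq_of_subset_of_card_le
      · intro z hzm
        obtain ⟨j, hj, rfl⟩ := mem_image.mp hzm
        exact hup j (by simp at hj; omega)
      · rw [Finset.card_image_of_injOn, card_range, hTcard]
        intro a ha b hb hab
        simp only [mem_coe, mem_range] at ha hb
        exact addcast_inj (by omega) (by omega) hab
    · push_neg at hup
      obtain ⟨a₀, ha₀L, ha₀⟩ := hup
      have hex : ∃ a : ℕ, τ + ((a : ℕ) : ZMod n) ∉ T := ⟨a₀, ha₀⟩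
      set a₁ := Nat.find hex with ha₁def
      have ha₁spec : τ + ((a₁ : ℕ) : ZMod n) ∉ T := Nat.find_spec hex
      have ha₁min : ∀ c < a₁, τ + ((c : ℕ) : ZMod n) ∈ T := by
        intro c hc
        by_contra hcc
        exact absurd (Nat.find_min' hex hcc) (by omega)
      have ha₁pos : 1 ≤ a₁ := by
        by_contra hc
        push_neg at hc
        interval_cases a₁
        · simp at ha₁spec; exact ha₁spec hτ
      have ha₁le : a₁ ≤ L - 1 := le_trans (Nat.find_min' hex ha₀) ha₀L
      have hlow : ∀ a : ℕ, a₁ ≤ a → a ≤ L - 1 → τ - ((L - a : ℕ) : ZMod n) ∈ T := by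
        intro a h1 h2
        rcases hrule τ hτ a a₁ (by omega) h2 h1 with h | h
        · exact h
        · exact absurd h ha₁spec
      refine ⟨τ - ((L - a₁ : ℕ) : ZMod n), ?_⟩
      symm
      apply Finset.eq_of_subset_of_card_le
      · intro z hzm
        obtain ⟨j, hj, rfl⟩ := mem_image.mp hzm
        simp only [mem_range] at hj
        rcases Nat.lt_or_ge j (L - a₁) with hj1 | hj1
        · rw [keyd τ (L - a₁) j (by omega)]
          have h11 : L - a₁ - j = L - (a₁ + j) := by omega
          rw [h11]
          exact hlow (a₁ + j) (by omega) (by omega)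
        · have h12 : ((j : ℕ) : ZMod n) = ((L - a₁ : ℕ) : ZMod n) + ((j - (L - a₁) : ℕ) : ZMod n) := by
            rw [← Nat.cast_add]
            congr 1
            omega
          rw [h12]
          have h13 : τ - ((L - a₁ : ℕ) : ZMod n) + (((L - a₁ : ℕ) : ZMod n) + ((j - (L - a₁) : ℕ) : ZMod n))
              = τ + ((j - (L - a₁) : ℕ) : ZMod n) := by ring
          rw [h13]
          exact ha₁min _ (by omega)
      · rw [Finset.card_image_of_injOn, card_range, hTcard]
        intro a ha b hb hab
        simp only [mem_coe, mem_range] at ha hb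
        exact addcast_inj (by omega) (by omega) hab
  · -- Branch A : s' < L
    have hs'lt : s' < L := lt_of_le_of_ne hs'L hBL
    have hdeepex : ∃ τ ∈ T, Dback n L T τ = t₁ + 1 := by
      by_contra hc
      push_neg at hc
      have hle2 : ∀ τ ∈ T, Dback n L T τ ≤ t₁ := fun τ hτ => by
        have h1 := hDle τ hτ
        have h2 := hc τ hτ
        omega
      have hsl : ∑ τ ∈ T, Dback n L T τ ≤ ∑ τ ∈ T, t₁ := Finset.sum_le_sum hle2
      rw [hsum, Finset.sum_const, smul_eq_mul, hTcard] at hsl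
      have e3 : L * t₁ = t₁ * L := mul_comm _ _
      omega
    have hoffle : ∀ τ ∈ T, offT n T τ ≤ L - 1 := by
      intro τ hτ
      by_contra hc
      push_neg at hc
      have hsub : (range (L + 1)).image (fun i : ℕ => τ - ((i : ℕ) : ZMod n)) ⊆ T := by
        intro z hzm
        obtain ⟨i, hi, rfl⟩ := mem_image.mp hzm
        simp only [mem_range] at hi
        exact offT_mem hτ hz (by omega)
      have hcd := Finset.card_le_card hsub
      rw [Finset.card_image_of_injOn, card_range, hTcard] at hcd
      · omega
      · intro a ha b hb hab
        simp only [mem_coe, mem_range] at ha hb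
        exact subcast_inj (by omega) (by omega) hab
    have hdeepoff : ∀ τ ∈ T, Dback n L T τ = t₁ + 1 → L - s' ≤ offT n T τ := by
      intro τ hτ hD
      by_contra hc
      push_neg at hc
      have h1 := offT_notMem hτ hz
      exact h1 (hdeepInt τ hτ hD (offT n T τ + 1) (by omega))
    have hAcard : (T.filter (fun τ => offT n T τ < L - s')).card ≤ L - s' := by
      have hsub : T.filter (fun τ => offT n T τ < L - s') ⊆
          T.filter (fun τ => Dback n L T τ ≤ t₁) := by
        intro τ hτm
        rw [mem_filter] at hτm ⊢
        refine ⟨hτm.1, ?_⟩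
        have h1 := hDle τ hτm.1
        rcases Nat.lt_or_ge (Dback n L T τ) (t₁ + 1) with h | h
        · omega
        · exfalso
          have h2 := hdeepoff τ hτm.1 (by omega)
          omega
      have hcard2 : (T.filter (fun τ => Dback n L T τ ≤ t₁)).card ≤ L - s' := by
        have h8 : ∑ τ ∈ T, ((t₁ + 1) - Dback n L T τ) + ∑ τ ∈ T, Dback n L T τ
            = ∑ τ ∈ T, (t₁ + 1) := by
          rw [← Finset.sum_add_distrib]
          exact Finset.sum_congr rfl (fun τ hτ => by have := hDle τ hτ; omega)
        rw [hsum, Finset.sum_const, smul_eq_mul, hTcard] at h8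
        have h9 : (T.filter (fun τ => Dback n L T τ ≤ t₁)).card
            ≤ ∑ τ ∈ T.filter (fun τ => Dback n L T τ ≤ t₁), ((t₁ + 1) - Dback n L T τ) := by
          have := Finset.card_nsmul_le_sum (T.filter (fun τ => Dback n L T τ ≤ t₁))
            (fun τ => (t₁ + 1) - Dback n L T τ) 1
            (fun τ hτm => by rw [mem_filter] at hτm; obtain ⟨_, hh⟩ := hτm; show 1 ≤ t₁ + 1 - Dback n L T τ; omega)
          simpa using this
        have h10 : ∑ τ ∈ T.filter (fun τ => Dback n L T τ ≤ t₁), ((t₁ + 1) - Dback n L T τ)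
            ≤ ∑ τ ∈ T, ((t₁ + 1) - Dback n L T τ) :=
          Finset.sum_le_sum_of_subset (Finset.filter_subset _ _)
        have e3 : L * (t₁ + 1) = t₁ * L + L := by ring
        omega
      exact le_trans (Finset.card_le_card hsub) hcard2
    obtain ⟨τs, hτs, hτsD⟩ := hdeepex
    set c := τs - ((offT n T τs : ℕ) : ZMod n) with hcdef
    have hoffs : L - s' ≤ offT n T τs := hdeepoff τs hτs hτsD
    -- each c + j  (j < L - s') lies in T with offT = j
    have hcj : ∀ j : ℕ, j < L - s' → (c + ((j : ℕ) : ZMod n) ∈ T ∧ offT n T (c + ((j : ℕ) : ZMod n)) = j) := by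
      intro j hj
      have hcjeq : c + ((j : ℕ) : ZMod n) = τs - ((offT n T τs - j : ℕ) : ZMod n) := by
        rw [hcdef, keyd τs (offT n T τs) j (by omega)]
      have hmem : c + ((j : ℕ) : ZMod n) ∈ T := by
        rw [hcjeq]; exact offT_mem hτs hz (by omega)
      refine ⟨hmem, ?_⟩
      rw [offT_eq hmem hz]
      rw [Nat.find_eq_iff]
      constructor
      · rw [hcjeq]
        have h14 : τs - ((offT n T τs - j : ℕ) : ZMod n) - ((j + 1 : ℕ) : ZMod n)
            = τs - ((offT n T τs + 1 : ℕ) : ZMod n) := by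
          have h15 : ((offT n T τs + 1 : ℕ) : ZMod n)
              = ((offT n T τs - j : ℕ) : ZMod n) + ((j + 1 : ℕ) : ZMod n) := by
            rw [← Nat.cast_add]
            congr 1
            omega
          rw [h15]
          ring
        rw [h14]
        exact offT_notMem hτs hz
      · intro m hm
        simp only [not_not]
        rw [hcjeq]
        have h14 : τs - ((offT n T τs - j : ℕ) : ZMod n) - ((m + 1 : ℕ) : ZMod n)
            = τs - ((offT n T τs - j + (m + 1) : ℕ) : ZMod n) := by
          push_cast
          ring
        rw [h14]
        exact offT_mem hτs hz (by omega)
    have hrun : ∀ τ ∈ T, τ - ((offT n T τ : ℕ) : ZMod n) = c := by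
      intro τ₂ hτ₂
      by_contra hne
      set c₂ := τ₂ - ((offT n T τ₂ : ℕ) : ZMod n) with hc₂def
      have hc₂T : c₂ ∈ T := by
        rw [hc₂def]
        exact offT_mem hτ₂ hz le_rfl
      have hc₂off : offT n T c₂ = 0 := by
        rw [offT_eq hc₂T hz]
        rw [Nat.find_eq_iff]
        refine ⟨?_, by omega⟩
        rw [hc₂def]
        have h14 : τ₂ - ((offT n T τ₂ : ℕ) : ZMod n) - ((0 + 1 : ℕ) : ZMod n)
            = τ₂ - ((offT n T τ₂ + 1 : ℕ) : ZMod n) := by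
          rw [Nat.cast_add]
          push_cast
          ring
        rw [h14]
        exact offT_notMem hτ₂ hz
      -- build a too-large subset of the filter
      have hsub2 : insert c₂ ((range (L - s')).image (fun j : ℕ => c + ((j : ℕ) : ZMod n)))
          ⊆ T.filter (fun τ => offT n T τ < L - s') := by
        intro z hzm
        rw [mem_insert] at hzm
        rcases hzm with rfl | hzm
        · rw [mem_filter]
          exact ⟨hc₂T, by rw [hc₂off]; omega⟩
        · obtain ⟨j, hj, rfl⟩ := mem_image.mp hzm
          simp only [mem_range] at hj
          rw [mem_filter]
          obtain ⟨h1, h2⟩ := hcj j hj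
          exact ⟨h1, by rw [h2]; omega⟩
      have hnotmem : c₂ ∉ (range (L - s')).image (fun j : ℕ => c + ((j : ℕ) : ZMod n)) := by
        intro hmem
        obtain ⟨j, hj, hje⟩ := mem_image.mp hmem
        simp only [mem_range] at hj
        rcases Nat.eq_zero_or_pos j with h0 | h0
        · subst h0
          simp only [Nat.cast_zero, add_zero] at hje
          exact hne (hje.symm)
        · obtain ⟨_, h2⟩ := hcj j hj
          rw [hje] at h2
          rw [hc₂off] at h2
          omega
      have hic := Finset.card_le_card hsub2
      rw [Finset.card_insert_of_notMem hnotmem, Finset.card_image_of_injOn, card_range] at hic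
      · omega
      · intro a ha b hb hab
        simp only [mem_coe, mem_range] at ha hb
        exact addcast_inj (by omega) (by omega) hab
    refine ⟨c, ?_⟩
    apply Finset.eq_of_subset_of_card_le
    · intro τ hτm
      rw [mem_image]
      refine ⟨offT n T τ, ?_, ?_⟩
      · rw [mem_range]
        have := hoffle τ hτm
        omega
      · have := hrun τ hτm
        rw [← this]
        ring
    · calc ((range L).image (fun (j : ℕ) => c + (j : ZMod n))).card ≤ (range L).card :=
            Finset.card_image_le
        _ = L := card_range L
        _ = T.card := hTcard.symm


end KWI

/-- If a `k`-wise intersecting family of intervals of length `r < (k-1)n/k` in a cyclic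
order has exactly `r` members, then it consists precisely of the `r` intervals of
length `r` containing some fixed position `x`. -/
theorem kwise_intersecting_intervals_extremal (n r k : ℕ) (hk : 2 ≤ k) (hn : 0 < n)
    (σ : ZMod n ≃ Fin n) (F : Finset (Finset (Fin n)))
    (hint : ∀ A ∈ F, ∃ x : ZMod n, A = cInterval n r σ x)
    (hkw : ∀ f : Fin k → Finset (Fin n), (∀ i, f i ∈ F) → ∃ v, ∀ i, v ∈ f i)
    (hr : k * r < (k - 1) * n)
    (hFr : F.card = r) :
    ∃ x : ZMod n,
      F = (Finset.range r).image (fun (j : ℕ) => cInterval n r σ (x - (j : ZMod n))) := by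
  classical
  haveI : NeZero n := ⟨by omega⟩
  rcases Nat.eq_zero_or_pos r with hr0 | hr0
  · subst hr0
    exact ⟨0, by simp [Finset.card_eq_zero.mp hFr]⟩
  have hrn : r < n := by
    by_contra hc
    push_neg at hc
    have h1 : (k - 1) * n ≤ (k - 1) * r := Nat.mul_le_mul_left _ hc
    have h2 : (k - 1) * r < k * r := (Nat.mul_lt_mul_right hr0).mpr (by omega)
    omega
  set L := n - r with hLdef
  have hL1 : 0 < L := by omega
  have hLn : L + 1 ≤ n := by omega
  have hkL : n < k * L := by
    obtain ⟨k', rfl⟩ : ∃ k', k = k' + 1 := ⟨k - 1, by omega⟩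
    have e1 : (k' + 1 - 1) * n = k' * n := by congr 1
    rw [e1] at hr
    have e3 : (k' + 1) * n = (k' + 1) * L + (k' + 1) * r := by
      rw [← Nat.mul_add]
      congr 1
      omega
    have e4 : (k' + 1) * n = k' * n + n := by ring
    have e5 : (k' + 1) * r = k' * r + r := by ring
    have e6 : k' * n = k' * L + k' * r := by
      rw [← Nat.mul_add]; congr 1; omega
    omega
  set st : Finset (Fin n) → ZMod n :=
    fun A => if h : ∃ x : ZMod n, A = cInterval n r σ x then h.choose else 0 with hstdef
  have hstspec : ∀ A ∈ F, A = cInterval n r σ (st A) := by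
    intro A hA
    obtain ⟨x, hx⟩ := hint A hA
    rw [hstdef]
    simp only
    rw [dif_pos ⟨x, hx⟩]
    exact (⟨x, hx⟩ : ∃ x, A = cInterval n r σ x).choose_spec
  set S := F.image st with hSdef
  have hSF : ∀ z ∈ S, cInterval n r σ z ∈ F := by
    intro z hzm
    obtain ⟨A, hA, rfl⟩ := mem_image.mp hzm
    rw [← hstspec A hA]
    exact hA
  have hScard : S.card = r := by
    rw [hSdef, Finset.card_image_of_injOn, hFr]
    intro A hA B hB hAB
    rw [hstspec A (by simpa using hA), hstspec B (by simpa using hB), hAB]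
  set T := (univ : Finset (ZMod n)) \ S with hTdef
  have hTcard : T.card = L := by
    rw [hTdef, Finset.card_sdiff_of_subset (Finset.subset_univ S), Finset.card_univ, ZMod.card n, hScard]
  have hST : ∀ z : ZMod n, z ∉ T ↔ z ∈ S := by
    intro z
    rw [hTdef]
    simp
  have hmemI : ∀ (z : ZMod n) (v : Fin n),
      v ∈ cInterval n r σ z ↔ ∃ c, c < r ∧ σ.symm v = z + (c : ZMod n) := by
    intro z v
    rw [cInterval]
    simp only [mem_image, mem_range]
    constructor
    · rintro ⟨i, hi, rfl⟩
      exact ⟨i, hi, by simp⟩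
    · rintro ⟨c, hc, hcv⟩
      exact ⟨c, hc, by rw [← hcv]; simp⟩
  have hNC : ∀ (x : ZMod n) (t : ℕ) (o : ℕ → ℕ), t + 1 ≤ k → o 0 = 0 →
      (∀ i, i < t → o (i + 1) ≤ o i + L) → (∀ i, i ≤ t → o i ≤ n - 1) → n - L ≤ o t →
      ∃ i, i ≤ t ∧ (x + (o i : ZMod n)) ∈ T := by
    intro x t o htk ho0 hdiff hbd hlast
    by_contra hcon
    push_neg at hcon
    have hallS : ∀ i, i ≤ t → x + (o i : ZMod n) ∈ S := fun i hi => (hST _).mp (hcon i hi)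
    obtain ⟨v, hv⟩ := hkw (fun i => cInterval n r σ (x + (o (min i.val t) : ZMod n)))
      (fun i => hSF _ (hallS _ (min_le_right _ _)))
    set y := σ.symm v with hydef
    have hcs : ∀ i, i ≤ t → ∃ c, c < r ∧ y = x + (o i : ZMod n) + (c : ZMod n) := by
      intro i hi
      have hik : i < k := by omega
      have hvv := hv ⟨i, hik⟩
      simp only at hvv
      rw [show min i t = i from min_eq_left hi] at hvv
      obtain ⟨c, hc, hcv⟩ := (hmemI _ _).mp hvv
      exact ⟨c, hc, hcv⟩
    set W := (y - x).val with hWdef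
    have hWlt : W < n := ZMod.val_lt _
    have hmodeq : ∀ i, i ≤ t → ∀ c : ℕ, y = x + (o i : ZMod n) + (c : ZMod n) →
        (o i + c) % n = W := by
      intro i hi c hcv
      have hz1 : ((o i + c : ℕ) : ZMod n) = y - x := by
        push_cast
        rw [hcv]
        ring
      have := congrArg ZMod.val hz1
      rwa [ZMod.val_natCast] at this
    have hnL : n - L = r := by omega
    rcases Nat.lt_or_ge W (o t) with hWo | hWo
    · have hPex : ∃ i, W < o i := ⟨t, hWo⟩
      set j₀ := Nat.find hPex with hj₀def
      have hj₀spec : W < o j₀ := Nat.find_spec hPex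
      have hj₀le : j₀ ≤ t := Nat.find_min' hPex hWo
      have hj₀pos : 1 ≤ j₀ := by
        by_contra hcc
        push_neg at hcc
        interval_cases j₀
        · rw [ho0] at hj₀spec
          omega
      have hprev : ¬ (W < o (j₀ - 1)) := Nat.find_min hPex (by omega)
      push_neg at hprev
      have hstep : o j₀ ≤ o (j₀ - 1) + L := by
        have := hdiff (j₀ - 1) (by omega)
        rwa [show j₀ - 1 + 1 = j₀ by omega] at this
      obtain ⟨cc, hcclt, hccv⟩ := hcs j₀ hj₀le
      have hmod := hmodeq j₀ hj₀le cc hccv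
      have hbd2 : o j₀ ≤ n - 1 := hbd j₀ hj₀le
      have heq2 : o j₀ + cc = W + n := by
        rcases Nat.lt_or_ge (o j₀ + cc) n with hlt2 | hge2
        · rw [Nat.mod_eq_of_lt hlt2] at hmod
          omega
        · have h3 : o j₀ + cc - n < n := by omega
          have h4 : (o j₀ + cc) % n = o j₀ + cc - n := by
            rw [Nat.mod_eq_sub_mod hge2, Nat.mod_eq_of_lt h3]
          omega
      omega
    · obtain ⟨cc, hcclt, hccv⟩ := hcs 0 (by omega)
      have hmod := hmodeq 0 (by omega) cc hccv
      rw [ho0] at hmod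
      simp only [Nat.zero_add] at hmod
      rw [Nat.mod_eq_of_lt (by omega)] at hmod
      omega
  obtain ⟨c, hTeq⟩ := KWI.core n L k hL1 hLn hkL T hTcard hNC
  set x₀ := c - 1 with hx₀def
  have hSimg : S = (range r).image (fun j : ℕ => x₀ - (j : ZMod n)) := by
    have hdis : ∀ i j : ℕ, i < r → j < L → x₀ - (i : ZMod n) ≠ c + (j : ZMod n) := by
      intro i j hi hj he
      rw [hx₀def] at he
      have h1 : ((i + j + 1 : ℕ) : ZMod n) = 0 := by
        push_cast
        linear_combination - he
      have h2 := congrArg ZMod.val h1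
      rw [ZMod.val_natCast, ZMod.val_zero, Nat.mod_eq_of_lt (by omega)] at h2
      omega
    symm
    apply Finset.eq_of_subset_of_card_le
    · intro z hzm
      obtain ⟨j, hj, rfl⟩ := mem_image.mp hzm
      rw [mem_range] at hj
      rw [← hST, hTeq]
      intro hmem2
      obtain ⟨i2, hi2, he2⟩ := mem_image.mp hmem2
      rw [mem_range] at hi2
      exact hdis j i2 hj hi2 he2.symm
    · rw [hScard, Finset.card_image_of_injOn, card_range]
      intro a ha b hb hab
      simp only [mem_coe, mem_range] at ha hb
      exact KWI.subcast_inj (by omega) (by omega) hab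
  refine ⟨x₀, ?_⟩
  have hFS : F = S.image (cInterval n r σ) := by
    ext A
    constructor
    · intro hA
      rw [mem_image]
      exact ⟨st A, mem_image_of_mem st hA, (hstspec A hA).symm⟩
    · intro hA
      obtain ⟨z, hz2, rfl⟩ := mem_image.mp hA
      exact hSF z hz2
  rw [hFS, hSimg, Finset.image_image]
  rfl
end

section
/- Let r ≤ n. The number of good cyclic orderings of V(M_n) in which a fixed independent r-subset F of M_n appears as an interval is r!(n-r)! 2^{n-r}. -/
/-- The vertex set of the perfect matching `M_n` is modeled as `ZMod (2n)`, with edges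
`{v, v + n}`. A set is independent if it contains no matched pair. -/
def Indep (n : ℕ) (S : Finset (ZMod (2 * n))) : Prop :=
  ∀ v ∈ S, v + (n : ZMod (2 * n)) ∉ S

/-- A cyclic ordering of the vertices: positions are `ZMod (2n)`. It is good if matched
vertices are placed exactly `n` apart. -/
def IsGood (n : ℕ) (c : ZMod (2 * n) ≃ ZMod (2 * n)) : Prop :=
  ∀ x, c (x + (n : ZMod (2 * n))) = c x + (n : ZMod (2 * n))

/-- Two cyclic orderings are identified if they differ by a rotation of positions. -/
def rotSetoidM (n : ℕ) : Setoid (ZMod (2 * n) ≃ ZMod (2 * n)) where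
  r c d := ∃ t : ZMod (2 * n), ∀ x, c x = d (x + t)
  iseqv := by
    refine ⟨fun c => ⟨0, fun x => by rw [add_zero]⟩, ?_, ?_⟩
    · rintro c d ⟨t, h⟩
      refine ⟨-t, fun x => ?_⟩
      rw [h (x + -t), add_assoc, neg_add_cancel, add_zero]
    · rintro c d e ⟨t, h⟩ ⟨s, h'⟩
      exact ⟨t + s, fun x => by rw [h, h', add_assoc]⟩

/-- The interval of length `r` starting at position `x` in the cyclic ordering `c`. -/
def mInterval (n r : ℕ) (c : ZMod (2 * n) ≃ ZMod (2 * n)) (x : ZMod (2 * n)) :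
    Finset (ZMod (2 * n)) :=
  (Finset.range r).image (fun (i : ℕ) => c (x + (i : ZMod (2 * n))))

section
variable (n : ℕ)

/-- Canonical representative of the matched pair `{x, x+n}`: the one with value `< n`. -/
def mrep (x : ZMod (2 * n)) : ZMod (2 * n) := if x.val < n then x else x + (n : ZMod (2*n))

lemma n_add_n (hn : 0 < n) : (n : ZMod (2*n)) + (n : ZMod (2*n)) = 0 := by
  have : ((n + n : ℕ) : ZMod (2*n)) = ((2*n : ℕ) : ZMod (2*n)) := by norm_num [two_mul]
  simpa using this.trans (ZMod.natCast_self (2*n))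

lemma val_add_n (hn : 0 < n) (x : ZMod (2*n)) :
    (x + (n : ZMod (2*n))).val = if x.val < n then x.val + n else x.val - n := by
  haveI : NeZero (2*n) := ⟨by omega⟩
  have hx : x.val < 2*n := ZMod.val_lt x
  have hnval : (n : ZMod (2*n)).val = n := ZMod.val_cast_of_lt (by omega)
  rw [ZMod.val_add, hnval]
  by_cases h : x.val < n
  · rw [if_pos h, Nat.mod_eq_of_lt (by omega)]
  · rw [if_neg h]
    have : x.val + n = (x.val - n) + 1 * (2*n) := by omega
    rw [this, Nat.add_mul_mod_self_right, Nat.mod_eq_of_lt (by omega)]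

lemma mrep_val_lt (hn : 0 < n) (x : ZMod (2*n)) : (mrep n x).val < n := by
  haveI : NeZero (2*n) := ⟨by omega⟩
  unfold mrep
  by_cases h : x.val < n
  · rwa [if_pos h]
  · rw [if_neg h, val_add_n n hn, if_neg h]
    have := ZMod.val_lt x
    omega

lemma mrep_eq_self (x : ZMod (2*n)) (h : x.val < n) : mrep n x = x := if_pos h

lemma add_n_add_n (hn : 0 < n) (x : ZMod (2*n)) :
    x + (n : ZMod (2*n)) + (n : ZMod (2*n)) = x := by
  rw [add_assoc, n_add_n n hn, add_zero]

lemma mrep_add_n (hn : 0 < n) (x : ZMod (2*n)) : mrep n (x + (n : ZMod (2*n))) = mrep n x := by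
  haveI : NeZero (2*n) := ⟨by omega⟩
  have hx := ZMod.val_lt x
  unfold mrep
  rw [val_add_n n hn]
  by_cases h : x.val < n
  · simp only [if_pos h, if_neg (show ¬ x.val + n < n by omega), add_n_add_n n hn]
  · simp only [if_neg h, if_pos (show x.val - n < n by omega)]

lemma mrep_recover (hn : 0 < n) (x : ZMod (2*n)) :
    x = mrep n x + (if x.val < n then 0 else (n : ZMod (2*n))) := by
  unfold mrep
  by_cases h : x.val < n
  · rw [if_pos h, if_pos h, add_zero]
  · rw [if_neg h, if_neg h, add_n_add_n n hn]

lemma mrep_eq_mrep (hn : 0 < n) {x y : ZMod (2*n)} (h : mrep n x = mrep n y) :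
    y = x ∨ y = x + (n : ZMod (2*n)) := by
  unfold mrep at h
  split_ifs at h with hx hy hy
  · exact Or.inl h.symm
  · right; rw [h, add_n_add_n n hn]
  · right; rw [h]
  · left; exact (add_left_injective _ h).symm



section
variable (n : ℕ)

lemma cast_val_lt (hn : 0 < n) {k : ℕ} (hk : k < 2*n) : ((k : ZMod (2*n))).val = k := by
  haveI : NeZero (2*n) := ⟨by omega⟩
  exact ZMod.val_cast_of_lt hk

lemma val_cast_self (hn : 0 < n) (x : ZMod (2*n)) : ((x.val : ℕ) : ZMod (2*n)) = x := by
  haveI : NeZero (2*n) := ⟨by omega⟩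
  exact ZMod.natCast_zmod_val x

lemma good_ext (hn : 0 < n) {c d : ZMod (2*n) ≃ ZMod (2*n)}
    (hc : IsGood n c) (hd : IsGood n d)
    (h : ∀ k < n, c ((k : ℕ) : ZMod (2*n)) = d ((k : ℕ) : ZMod (2*n))) : c = d := by
  haveI : NeZero (2*n) := ⟨by omega⟩
  ext x
  have hx := ZMod.val_lt x
  by_cases hv : x.val < n
  · have := h x.val hv
    rwa [val_cast_self n hn] at this
  · have hk : x.val - n < n := by omega
    have hxe : x = ((x.val - n : ℕ) : ZMod (2*n)) + (n : ZMod (2*n)) := by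
      have : ((x.val - n : ℕ) : ZMod (2*n)) + (n : ZMod (2*n)) = (((x.val - n) + n : ℕ) : ZMod (2*n)) := by push_cast; ring
      rw [this, show x.val - n + n = x.val by omega, val_cast_self n hn]
    rw [hxe, hc, hd, h _ hk]


lemma interval_start (hn : 0 < n) {r : ℕ} (hr0 : 0 < r) (hrn : r ≤ n) (t : ZMod (2*n))
    (h : (Finset.range r).image (fun i : ℕ => t + (i : ZMod (2*n)))
       = (Finset.range r).image (fun i : ℕ => (i : ZMod (2*n)))) : t = 0 := by
  haveI : NeZero (2*n) := ⟨by omega⟩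
  have ht : t ∈ (Finset.range r).image (fun i : ℕ => (i : ZMod (2*n))) := by
    rw [← h]
    exact Finset.mem_image.mpr ⟨0, Finset.mem_range.mpr hr0, by simp⟩
  obtain ⟨i₀, hi₀, hti⟩ := Finset.mem_image.mp ht
  rw [Finset.mem_range] at hi₀
  by_cases h0 : i₀ = 0
  · rw [← hti, h0]; simp
  · exfalso
    have hm : t + ((r - i₀ : ℕ) : ZMod (2*n)) ∈ (Finset.range r).image (fun i : ℕ => (i : ZMod (2*n))) := by
      rw [← h]
      exact Finset.mem_image.mpr ⟨r - i₀, Finset.mem_range.mpr (by omega), rfl⟩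
    obtain ⟨j, hj, hje⟩ := Finset.mem_image.mp hm
    rw [Finset.mem_range] at hj
    have : t + ((r - i₀ : ℕ) : ZMod (2*n)) = ((r : ℕ) : ZMod (2*n)) := by
      rw [← hti, ← Nat.cast_add, show i₀ + (r - i₀) = r by omega]
    rw [this] at hje
    have := congrArg ZMod.val hje
    rw [cast_val_lt n hn (by omega), cast_val_lt n hn (by omega)] at this
    omega

def mD : Finset (ZMod (2*n)) := (Finset.range n).image (fun k : ℕ => (k : ZMod (2*n)))

lemma mem_mD (hn : 0 < n) (x : ZMod (2*n)) : x ∈ mD n ↔ x.val < n := by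
  constructor
  · rintro hx
    obtain ⟨k, hk, rfl⟩ := Finset.mem_image.mp hx
    rw [Finset.mem_range] at hk
    rw [cast_val_lt n hn (by omega)]; exact hk
  · intro hx
    exact Finset.mem_image.mpr ⟨x.val, Finset.mem_range.mpr hx, val_cast_self n hn x⟩

variable {n} in
def mR (F : Finset (ZMod (2*n))) : Finset (ZMod (2*n)) :=
  (mD n).filter (fun x => x ∉ F ∧ x + (n : ZMod (2*n)) ∉ F)

lemma mem_mR (hn : 0 < n) (F : Finset (ZMod (2*n))) (x : ZMod (2*n)) :
    x ∈ mR F ↔ x.val < n ∧ x ∉ F ∧ x + (n : ZMod (2*n)) ∉ F := by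
  rw [mR, Finset.mem_filter, mem_mD n hn]

lemma card_mR (hn : 0 < n) {r : ℕ} (hrn : r ≤ n) (F : Finset (ZMod (2*n)))
    (hF : F.card = r) (hFind : ∀ v ∈ F, v + (n : ZMod (2 * n)) ∉ F) :
    (mR F).card = n - r := by
  have hmDcard : (mD n).card = n := by
    rw [mD, Finset.card_image_of_injOn, Finset.card_range]
    intro a ha b hb hab
    simp only [Finset.coe_range, Set.mem_Iio] at ha hb
    have := congrArg ZMod.val hab
    rwa [cast_val_lt n hn (by omega), cast_val_lt n hn (by omega)] at this
  have hset : mR F = mD n \ F.image (mrep n) := by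
    ext x
    rw [mem_mR n hn, Finset.mem_sdiff, mem_mD n hn, Finset.mem_image]
    constructor
    · rintro ⟨h1, h2, h3⟩
      refine ⟨h1, ?_⟩
      rintro ⟨y, hy, rfl⟩
      rcases mrep_recover n hn y with hrec
      by_cases hv : y.val < n
      · rw [if_pos hv, add_zero] at hrec; exact h2 (hrec ▸ hy)
      · rw [if_neg hv] at hrec; exact h3 (hrec ▸ hy)
    · rintro ⟨h1, h2⟩
      refine ⟨h1, fun hx => h2 ⟨x, hx, mrep_eq_self n x h1⟩, fun hx => h2 ⟨x + n, hx, ?_⟩⟩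
      rw [mrep_add_n n hn, mrep_eq_self n x h1]
  rw [hset, Finset.card_sdiff_of_subset, hmDcard, Finset.card_image_of_injOn, hF]
  · intro a ha b hb hab
    rcases mrep_eq_mrep n hn hab with h | h
    · exact h.symm
    · exact absurd (h ▸ hb) (hFind a ha)
  · intro x hx
    obtain ⟨y, _, rfl⟩ := Finset.mem_image.mp hx
    exact (mem_mD n hn _).mpr (mrep_val_lt n hn y)

variable {n} in
lemma minterval_image (r : ℕ) (c : ZMod (2*n) ≃ ZMod (2*n)) (x : ZMod (2*n)) :
    mInterval n r c x = Finset.image c ((Finset.range r).image (fun i : ℕ => x + (i : ZMod (2*n)))) := by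
  rw [mInterval, Finset.image_image]; rfl

lemma step1 (hn : 0 < n) (r : ℕ) (hr0 : 0 < r) (hrn : r ≤ n) (F : Finset (ZMod (2*n))) :
    Nat.card {q : Quotient (rotSetoidM n) //
        ∃ c : ZMod (2 * n) ≃ ZMod (2 * n), Quotient.mk (rotSetoidM n) c = q ∧
          IsGood n c ∧ ∃ x : ZMod (2 * n), F = mInterval n r c x}
      = Nat.card {c : ZMod (2*n) ≃ ZMod (2*n) // IsGood n c ∧ F = mInterval n r c 0} := by
  haveI : NeZero (2*n) := ⟨by omega⟩
  refine (Nat.card_eq_of_bijective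
    (fun c => ⟨Quotient.mk (rotSetoidM n) c.1, c.1, rfl, c.2.1, 0, c.2.2⟩) ⟨?_, ?_⟩).symm
  · rintro ⟨c, hcg, hcF⟩ ⟨d, hdg, hdF⟩ h
    have h' : Quotient.mk (rotSetoidM n) c = Quotient.mk (rotSetoidM n) d := congrArg Subtype.val h
    obtain ⟨t, ht⟩ := Quotient.exact h'
    have himg : mInterval n r d t = mInterval n r d 0 := by
      have : mInterval n r c 0 = mInterval n r d t := by
        rw [mInterval, mInterval]
        apply Finset.image_congr
        intro i _
        show c (0 + (i : ZMod (2*n))) = d (t + (i : ZMod (2*n)))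
        rw [ht]
        ring_nf
      rw [← this, ← hcF, hdF]
    have ht0 : t = 0 := by
      rw [minterval_image, minterval_image] at himg
      have := Finset.image_injective d.injective himg
      apply interval_start n hn hr0 hrn t
      simpa using this
    have : c = d := by
      apply Equiv.ext
      intro x
      rw [ht x, ht0, add_zero]
    exact Subtype.ext this
  · rintro ⟨q, c, rfl, hcg, x, hcF⟩
    refine ⟨⟨(Equiv.addRight x).trans c, fun y => ?_, ?_⟩, ?_⟩
    · show c (y + (n : ZMod (2*n)) + x) = c (y + x) + n
      rw [show y + (n : ZMod (2*n)) + x = (y + x) + n by ring, hcg]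
    · rw [hcF, mInterval, mInterval]
      apply Finset.image_congr
      intro i _
      show c (x + i) = c (0 + (i:ZMod (2*n)) + x)
      ring_nf
    · apply Subtype.ext
      apply Quotient.sound
      exact ⟨x, fun y => rfl⟩

lemma pair_notMem (hn : 0 < n) (F : Finset (ZMod (2*n))) {x : ZMod (2*n)}
    (h1 : x ∉ F) (h2 : x + (n : ZMod (2*n)) ∉ F) :
    mrep n x ∉ F ∧ mrep n x + (n : ZMod (2*n)) ∉ F := by
  unfold mrep
  by_cases h : x.val < n
  · rw [if_pos h]; exact ⟨h1, h2⟩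
  · rw [if_neg h, add_n_add_n n hn]; exact ⟨h2, h1⟩

lemma mrep_add_bool (hn : 0 < n) (x : ZMod (2*n)) (b : Bool) :
    mrep n (x + (if b then (n : ZMod (2*n)) else 0)) = mrep n x := by
  cases b
  · rw [if_neg (by simp), add_zero]
  · rw [if_pos rfl, mrep_add_n n hn]

variable {n} in
def gfun (r : ℕ) (σ : Fin r → ZMod (2*n)) (ρ : Fin (n - r) → ZMod (2*n))
    (ε : Fin (n - r) → Bool) : ℕ → ZMod (2*n) :=
  fun k => if h : k < r then σ ⟨k, h⟩
    else if h' : k - r < n - r then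
      ρ ⟨k - r, h'⟩ + (if ε ⟨k - r, h'⟩ then (n : ZMod (2*n)) else 0)
    else 0

variable {n} in
def ffun (r : ℕ) (σ : Fin r → ZMod (2*n)) (ρ : Fin (n - r) → ZMod (2*n))
    (ε : Fin (n - r) → Bool) : ZMod (2*n) → ZMod (2*n) :=
  fun x => if x.val < n then gfun r σ ρ ε x.val else gfun r σ ρ ε (x.val - n) + n

section
variable (hn : 0 < n) {r : ℕ} (hrn : r ≤ n) (F : Finset (ZMod (2*n)))
  (hFind : Indep n F)
  (σ : Fin r → ZMod (2*n)) (ρ : Fin (n - r) → ZMod (2*n)) (ε : Fin (n - r) → Bool)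
  (hσF : ∀ i, σ i ∈ F) (hσinj : Function.Injective σ)
  (hρR : ∀ j, ρ j ∈ mR F) (hρinj : Function.Injective ρ)

include hn hrn hFind hσF hσinj hρR hρinj in
lemma gfun_mrep_inj : ∀ k < n, ∀ k' < n,
    mrep n (gfun r σ ρ ε k) = mrep n (gfun r σ ρ ε k') → k = k' := by
  have key : ∀ k, ∀ _h1 : ¬ k < r, ∀ _h2 : k < n,
      mrep n (gfun r σ ρ ε k) = ρ ⟨k - r, by omega⟩ := by
    intro k h1 h2
    rw [gfun, dif_neg h1, dif_pos (show k - r < n - r by omega),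
      mrep_add_bool n hn, mrep_eq_self n _ ((mem_mR n hn F _).mp (hρR _)).1]
  intro k hk k' hk' h
  by_cases h1 : k < r <;> by_cases h2 : k' < r
  · rw [gfun, dif_pos h1, gfun, dif_pos h2] at h
    rcases mrep_eq_mrep n hn h with he | he
    · have : (⟨k, h1⟩ : Fin r) = ⟨k', h2⟩ := hσinj he.symm
      exact congrArg Fin.val this
    · exact absurd (he ▸ hσF ⟨k', h2⟩) (hFind _ (hσF ⟨k, h1⟩))
  · exfalso
    rw [gfun, dif_pos h1, key k' h2 hk'] at h
    have hmem := (mem_mR n hn F _).mp (hρR ⟨k' - r, by omega⟩)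
    have hrec := mrep_recover n hn (σ ⟨k, h1⟩)
    by_cases hv : (σ ⟨k, h1⟩).val < n
    · rw [if_pos hv, add_zero] at hrec
      exact hmem.2.1 (h ▸ hrec ▸ hσF ⟨k, h1⟩)
    · rw [if_neg hv] at hrec
      rw [h] at hrec
      exact hmem.2.2 (hrec ▸ hσF ⟨k, h1⟩)
  · exfalso
    rw [key k h1 hk, gfun, dif_pos h2] at h
    have hmem := (mem_mR n hn F _).mp (hρR ⟨k - r, by omega⟩)
    have hrec := mrep_recover n hn (σ ⟨k', h2⟩)
    by_cases hv : (σ ⟨k', h2⟩).val < n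
    · rw [if_pos hv, add_zero] at hrec
      exact hmem.2.1 (h ▸ hrec ▸ hσF ⟨k', h2⟩)
    · rw [if_neg hv] at hrec
      rw [← h] at hrec
      exact hmem.2.2 (hrec ▸ hσF ⟨k', h2⟩)
  · rw [key k h1 hk, key k' h2 hk'] at h
    have := hρinj h
    have := congrArg Fin.val this
    simp only at this
    omega

include hn hrn hFind hσF hσinj hρR hρinj in
lemma ffun_inj : Function.Injective (ffun r σ ρ ε) := by
  haveI : NeZero (2*n) := ⟨by omega⟩
  have hn0 : (n : ZMod (2*n)) ≠ 0 := by
    intro h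
    have := congrArg ZMod.val h
    rw [cast_val_lt n hn (by omega), ZMod.val_zero] at this
    omega
  have ginj := gfun_mrep_inj n hn hrn F hFind σ ρ ε hσF hσinj hρR hρinj
  intro x y h
  have hx := ZMod.val_lt x
  have hy := ZMod.val_lt y
  rw [ffun, ffun] at h
  by_cases h1 : x.val < n <;> by_cases h2 : y.val < n <;>
    simp only [if_pos, if_neg, h1, h2, if_true, if_false] at h
  · have := ginj x.val h1 y.val h2 (congrArg (mrep n) h)
    rw [← val_cast_self n hn x, ← val_cast_self n hn y, this]
  · exfalso
    have hm : mrep n (gfun r σ ρ ε x.val) = mrep n (gfun r σ ρ ε (y.val - n)) := by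
      rw [h, mrep_add_n n hn]
    have := ginj x.val h1 (y.val - n) (by omega) hm
    rw [this] at h
    exact hn0 (by simpa using (left_eq_add.mp h))
  · exfalso
    have hm : mrep n (gfun r σ ρ ε (x.val - n)) = mrep n (gfun r σ ρ ε y.val) := by
      rw [← h, mrep_add_n n hn]
    have := ginj (x.val - n) (by omega) y.val h2 hm
    rw [this] at h
    exact hn0 (by simpa using (left_eq_add.mp h.symm))
  · have := ginj (x.val - n) (by omega) (y.val - n) (by omega)
      (congrArg (mrep n) (add_right_cancel h))
    have hv : x.val = y.val := by omega
    rw [← val_cast_self n hn x, ← val_cast_self n hn y, hv]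

include hn in
lemma ffun_good : ∀ x, ffun r σ ρ ε (x + (n : ZMod (2*n))) = ffun r σ ρ ε x + (n : ZMod (2*n)) := by
  haveI : NeZero (2*n) := ⟨by omega⟩
  intro x
  have hx := ZMod.val_lt x
  rw [ffun, ffun, val_add_n n hn]
  by_cases h : x.val < n
  · rw [if_pos h, if_pos h, if_neg (show ¬ (x.val + n < n) by omega),
      Nat.add_sub_cancel]
  · rw [if_neg h, if_neg h, if_pos (show x.val - n < n by omega), add_n_add_n n hn]
end

lemma step2 (hn : 0 < n) (r : ℕ) (hr0 : 0 < r) (hrn : r ≤ n) (F : Finset (ZMod (2*n)))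
    (hF : F.card = r) (hFind : Indep n F) :
    Nat.card {c : ZMod (2*n) ≃ ZMod (2*n) // IsGood n c ∧ F = mInterval n r c 0}
      = r.factorial * (n - r).factorial * 2 ^ (n - r) := by
  haveI : NeZero (2*n) := ⟨by omega⟩
  -- membership facts
  have memF : ∀ (c : ZMod (2*n) ≃ ZMod (2*n)), F = mInterval n r c 0 →
      ∀ i < r, c ((i : ℕ) : ZMod (2*n)) ∈ F := by
    intro c hcF i hi
    rw [hcF, mInterval]
    exact Finset.mem_image.mpr ⟨i, Finset.mem_range.mpr hi, by rw [zero_add]⟩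
  have notF : ∀ (c : ZMod (2*n) ≃ ZMod (2*n)), IsGood n c → F = mInterval n r c 0 →
      ∀ k, r ≤ k → k < n →
        c ((k:ℕ) : ZMod (2*n)) ∉ F ∧ c ((k:ℕ):ZMod (2*n)) + (n : ZMod (2*n)) ∉ F := by
    intro c hcg hcF k hk1 hk2
    constructor
    · intro hmem
      rw [hcF, mInterval, Finset.mem_image] at hmem
      obtain ⟨i, hi, he⟩ := hmem
      rw [Finset.mem_range] at hi
      rw [zero_add] at he
      have := congrArg ZMod.val (c.injective he)
      rw [cast_val_lt n hn (by omega), cast_val_lt n hn (by omega)] at this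
      omega
    · intro hmem
      rw [hcF, mInterval, Finset.mem_image] at hmem
      obtain ⟨i, hi, he⟩ := hmem
      rw [Finset.mem_range] at hi
      rw [zero_add] at he
      rw [← hcg, show ((k:ℕ):ZMod (2*n)) + (n:ZMod (2*n)) = ((k + n : ℕ) : ZMod (2*n)) by
        push_cast; ring] at he
      have := congrArg ZMod.val (c.injective he)
      rw [cast_val_lt n hn (by omega), cast_val_lt n hn (by omega)] at this
      omega
  have memR : ∀ (c : ZMod (2*n) ≃ ZMod (2*n)), IsGood n c → F = mInterval n r c 0 →
      ∀ j : Fin (n - r), mrep n (c (((r + (j:ℕ)) : ℕ) : ZMod (2*n))) ∈ mR F := by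
    intro c hcg hcF j
    have hj := j.2
    have hnot := notF c hcg hcF (r + (j:ℕ)) (by omega) (by omega)
    have hp := pair_notMem n hn F hnot.1 hnot.2
    exact (mem_mR n hn F _).mpr ⟨mrep_val_lt n hn _, hp.1, hp.2⟩
  -- the two bijectivity facts for components
  have hbijσ : ∀ c : {c : ZMod (2*n) ≃ ZMod (2*n) // IsGood n c ∧ F = mInterval n r c 0},
      Function.Bijective (fun i : Fin r =>
        (⟨c.1 ((i : ℕ) : ZMod (2*n)), memF c.1 c.2.2 i i.2⟩ : {x // x ∈ F})) := by
    intro c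
    rw [Fintype.bijective_iff_injective_and_card]
    constructor
    · intro i i' h
      have h' := c.1.injective (Subtype.ext_iff.mp h)
      have := congrArg ZMod.val h'
      rw [cast_val_lt n hn (by omega), cast_val_lt n hn (by omega)] at this
      exact Fin.ext this
    · simp [hF]
  have hbijρ : ∀ c : {c : ZMod (2*n) ≃ ZMod (2*n) // IsGood n c ∧ F = mInterval n r c 0},
      Function.Bijective (fun j : Fin (n - r) =>
        (⟨mrep n (c.1 (((r + (j:ℕ)) : ℕ) : ZMod (2*n))), memR c.1 c.2.1 c.2.2 j⟩
          : {x // x ∈ mR F})) := by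
    intro c
    rw [Fintype.bijective_iff_injective_and_card]
    constructor
    · intro j j' h
      have hj := j.2; have hj' := j'.2
      rcases mrep_eq_mrep n hn (Subtype.ext_iff.mp h) with he | he
      · have := congrArg ZMod.val (c.1.injective he)
        rw [cast_val_lt n hn (by omega), cast_val_lt n hn (by omega)] at this
        exact Fin.ext (by omega)
      · exfalso
        rw [← c.2.1, show ((r + (j:ℕ) : ℕ):ZMod (2*n)) + (n:ZMod (2*n))
            = ((r + (j:ℕ) + n : ℕ) : ZMod (2*n)) by push_cast; ring] at he
        have := congrArg ZMod.val (c.1.injective he)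
        rw [cast_val_lt n hn (by omega), cast_val_lt n hn (by omega)] at this
        omega
    · simp [card_mR n hn hrn F hF hFind]
  -- the bijection
  let Φ : {c : ZMod (2*n) ≃ ZMod (2*n) // IsGood n c ∧ F = mInterval n r c 0} →
      (Fin r ≃ {x // x ∈ F}) × (Fin (n - r) ≃ {x // x ∈ mR F}) × (Fin (n - r) → Bool) :=
    fun c =>
      ⟨Equiv.ofBijective _ (hbijσ c), Equiv.ofBijective _ (hbijρ c),
       fun j => decide (n ≤ (c.1 (((r + (j:ℕ)) : ℕ) : ZMod (2*n))).val)⟩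
  have hbij : Function.Bijective Φ := by
    constructor
    · intro c d h
      have h1 : ∀ i : Fin r, c.1 ((i : ℕ) : ZMod (2*n)) = d.1 ((i : ℕ) : ZMod (2*n)) :=
        fun i => Subtype.ext_iff.mp (DFunLike.congr_fun (congrArg Prod.fst h) i)
      have h2 : ∀ j : Fin (n - r), mrep n (c.1 (((r + (j:ℕ)) : ℕ) : ZMod (2*n)))
          = mrep n (d.1 (((r + (j:ℕ)) : ℕ) : ZMod (2*n))) :=
        fun j => Subtype.ext_iff.mp (DFunLike.congr_fun (congrArg (fun p => p.2.1) h) j)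
      have h3 : ∀ j : Fin (n - r), decide (n ≤ (c.1 (((r + (j:ℕ)) : ℕ) : ZMod (2*n))).val)
          = decide (n ≤ (d.1 (((r + (j:ℕ)) : ℕ) : ZMod (2*n))).val) :=
        fun j => congrFun (congrArg (fun p => p.2.2) h) j
      apply Subtype.ext
      apply good_ext n hn c.2.1 d.2.1
      intro k hk
      by_cases hkr : k < r
      · exact h1 ⟨k, hkr⟩
      · have hj : k - r < n - r := by omega
        have hrj : r + ((⟨k - r, hj⟩ : Fin (n - r)) : ℕ) = k := by
          simp; omega
        have e2 := h2 ⟨k - r, hj⟩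
        have e3 := decide_eq_decide.mp (h3 ⟨k - r, hj⟩)
        rw [hrj] at e2 e3
        have hc' := mrep_recover n hn (c.1 ((k : ℕ) : ZMod (2*n)))
        have hd' := mrep_recover n hn (d.1 ((k : ℕ) : ZMod (2*n)))
        by_cases hcv : (c.1 ((k:ℕ) : ZMod (2*n))).val < n
        · have hdv : (d.1 ((k:ℕ) : ZMod (2*n))).val < n := by
            by_contra hh
            exact absurd (e3.mpr (by omega)) (by omega)
          rw [if_pos hcv] at hc'
          rw [if_pos hdv] at hd'
          rw [hc', hd', e2]
        · have hdv : ¬ (d.1 ((k:ℕ) : ZMod (2*n))).val < n := by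
            intro hh
            exact absurd (e3.mp (by omega)) (by omega)
          rw [if_neg hcv] at hc'
          rw [if_neg hdv] at hd'
          rw [hc', hd', e2]
    · rintro ⟨σ, ρ, ε⟩
      have hσF' : ∀ i, (σ i : ZMod (2*n)) ∈ F := fun i => (σ i).2
      have hσinj : Function.Injective (fun i => (σ i : ZMod (2*n))) :=
        fun i i' hh => σ.injective (Subtype.ext hh)
      have hρR' : ∀ j, (ρ j : ZMod (2*n)) ∈ mR F := fun j => (ρ j).2
      have hρinj : Function.Injective (fun j => (ρ j : ZMod (2*n))) :=
        fun j j' hh => ρ.injective (Subtype.ext hh)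
      have hfinj := ffun_inj n hn hrn F hFind _ _ ε hσF' hσinj hρR' hρinj
      have hfbij := Finite.injective_iff_bijective.mp hfinj
      let c : ZMod (2*n) ≃ ZMod (2*n) := Equiv.ofBijective _ hfbij
      have hck : ∀ k : ℕ, k < n →
          c ((k:ℕ):ZMod (2*n)) = gfun r (fun i => (σ i : ZMod (2*n)))
            (fun j => (ρ j : ZMod (2*n))) ε k := by
        intro k hk
        show ffun r _ _ ε ((k:ℕ):ZMod (2*n)) = _
        rw [ffun, cast_val_lt n hn (by omega), if_pos hk]
      have hgood : IsGood n c := ffun_good n hn _ _ ε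
      have hFi : F = mInterval n r c 0 := by
        have hsub : mInterval n r c 0 ⊆ F := by
          intro y hy
          rw [mInterval, Finset.mem_image] at hy
          obtain ⟨i, hi, rfl⟩ := hy
          rw [Finset.mem_range] at hi
          rw [zero_add, hck i (by omega), gfun, dif_pos hi]
          exact hσF' _
        refine (Finset.eq_of_subset_of_card_le hsub ?_).symm
        rw [hF, mInterval, Finset.card_image_of_injOn, Finset.card_range]
        intro a ha b hb hab
        simp only [Finset.coe_range, Set.mem_Iio] at ha hb
        have h' : c (0 + ((a:ℕ):ZMod (2*n))) = c (0 + ((b:ℕ):ZMod (2*n))) := hab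
        have := congrArg ZMod.val (c.injective h')
        rw [zero_add, zero_add, cast_val_lt n hn (by omega),
          cast_val_lt n hn (by omega)] at this
        exact this
      refine ⟨⟨c, hgood, hFi⟩, ?_⟩
      show (⟨Equiv.ofBijective _ _, Equiv.ofBijective _ _, _⟩ :
        (Fin r ≃ {x // x ∈ F}) × (Fin (n - r) ≃ {x // x ∈ mR F}) × (Fin (n - r) → Bool))
          = (σ, ρ, ε)
      refine Prod.ext ?_ (Prod.ext ?_ ?_)
      · apply Equiv.ext
        intro i
        apply Subtype.ext
        show c ((i : ℕ) : ZMod (2*n)) = (σ i : ZMod (2*n))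
        rw [hck i (by omega), gfun, dif_pos i.2]
      · apply Equiv.ext
        intro j
        apply Subtype.ext
        show mrep n (c (((r + (j:ℕ)) : ℕ) : ZMod (2*n))) = (ρ j : ZMod (2*n))
        have hj := j.2
        rw [hck _ (by omega), gfun, dif_neg (by omega),
          dif_pos (show r + (j:ℕ) - r < n - r by omega), mrep_add_bool n hn,
          mrep_eq_self n _ ((mem_mR n hn F _).mp (hρR' _)).1]
        simp [Nat.add_sub_cancel_left]
      · funext j
        show decide (n ≤ (c (((r + (j:ℕ)) : ℕ) : ZMod (2*n))).val) = ε j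
        have hj := j.2
        rw [hck _ (by omega), gfun, dif_neg (by omega),
          dif_pos (show r + (j:ℕ) - r < n - r by omega)]
        have hvρ : ((ρ j : ZMod (2*n))).val < n :=
          ((mem_mR n hn F _).mp (hρR' j)).1
        have hje : (⟨r + (j:ℕ) - r, by omega⟩ : Fin (n - r)) = j :=
          Fin.ext (by simp)
        rw [hje]
        cases hε : ε j
        · rw [if_neg (by simp), add_zero]
          simp only [decide_eq_false_iff_not, not_le]
          exact hvρ
        · rw [if_pos rfl, val_add_n n hn, if_pos hvρ]
          simp only [decide_eq_true_eq]
          omega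
  rw [Nat.card_eq_of_bijective Φ hbij, Nat.card_eq_fintype_card,
    Fintype.card_prod, Fintype.card_prod,
    Fintype.card_equiv (Fintype.equivOfCardEq (by simp [hF] :
      Fintype.card (Fin r) = Fintype.card {x // x ∈ F})),
    Fintype.card_equiv (Fintype.equivOfCardEq (by simp [card_mR n hn hrn F hF hFind] :
      Fintype.card (Fin (n - r)) = Fintype.card {x // x ∈ mR F})),
    Fintype.card_fun]
  simp [mul_assoc]

end


/-- For `r ≤ n`, the number of good cyclic orderings of `V(M_n)` (up to rotation) in which
a fixed independent `r`-subset `F` appears as an interval is `r!(n-r)! 2^(n-r)`. -/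
theorem card_good_orderings_with_independent_interval (n r : ℕ) (hr0 : 0 < r) (hrn : r ≤ n)
    (F : Finset (ZMod (2 * n))) (hF : F.card = r) (hFind : Indep n F) :
    Nat.card {q : Quotient (rotSetoidM n) //
        ∃ c : ZMod (2 * n) ≃ ZMod (2 * n), Quotient.mk (rotSetoidM n) c = q ∧
          IsGood n c ∧ ∃ x : ZMod (2 * n), F = mInterval n r c x}
      = r.factorial * (n - r).factorial * 2 ^ (n - r) := by
  have hn : 0 < n := lt_of_lt_of_le hr0 hrn
  rw [step1 n hn r hr0 hrn F, step2 n hn r hr0 hrn F hF hFind]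
end
end

section
/- For k ≥ 2 and r ≤ n with r ≤ (k-1)(2n)/k, if F is a k-wise intersecting family of independent r-subsets of the perfect matching M_n, then |F| ≤ 2^{r-1} C(n-1, r-1). -/
/-!
Katona's circle method for signed sets. Encode the vertex `i + a n` of `M_n` as the pair
`(i, a) : Fin n × Fin 2`. The cyclic orderings of `ZMod (2n)` that keep matched vertices opposite
are then the signed permutations `(i, a) ↦ (σ i, a + τ i)`, so there are `n! 2^n` of them. Since
`k ≥ 2` the family is intersecting, and as `2r ≤ 2n` it contains at most `r` of the `2n` arcs of
length `r` of any such ordering. On the other hand every independent `r`-set is the arc of at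
least `2n · r! (n-r)! 2^(n-r)` pairs (ordering, starting point). Double counting gives
`|F| ≤ r n! 2^n / (2n r! (n-r)! 2^(n-r)) = 2^(r-1) C(n-1, r-1)`.
-/

open Finset Equiv
open scoped Nat

theorem card_le_of_pairwise_intervals_meet {m r : ℕ} (hrm : 2 * r ≤ m) {S : Finset (ZMod m)}
    (hS : ∀ x ∈ S, ∀ y ∈ S, ∃ i < r, ∃ j < r, x + (i : ZMod m) = y + j) : #S ≤ r := by
  classical
  obtain rfl | ⟨x₀, hx₀⟩ := S.eq_empty_or_nonempty
  · simp
  have not_shift_mem : ∀ y ∈ S, y + r ∉ S := by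
    intro y hy hyr
    obtain ⟨i, hi, j, hj, h⟩ := hS y hy _ hyr
    have h' : ((i : ℕ) : ZMod m) = ((r + j : ℕ) : ZMod m) := by
      push_cast; linear_combination h
    rw [ZMod.natCast_eq_natCast_iff', Nat.mod_eq_of_lt (by omega),
      Nat.mod_eq_of_lt (by omega)] at h'
    omega
  have near : ∀ y ∈ S, ∃ t < r, y = x₀ + t ∨ y + r = x₀ + t := by
    intro y hy
    obtain ⟨i, hi, j, hj, h⟩ := hS x₀ hx₀ y hy
    rcases le_or_gt j i with hji | hij
    · exact ⟨i - j, by omega, Or.inl (by rw [Nat.cast_sub hji]; linear_combination -h)⟩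
    · refine ⟨i + r - j, by omega, Or.inr ?_⟩
      rw [Nat.cast_sub (by omega)]
      push_cast
      linear_combination -h
  -- `fold` lifts the starts lying just before `x₀` by `r`, into `[x₀, x₀ + r)`; it is
  -- injective because `y` and `y + r` are never both starts.
  let fold : ZMod m → ZMod m := fun y => if ∃ t < r, y = x₀ + t then y else y + r
  calc #S ≤ #((range r).image fun t : ℕ => x₀ + t) := by
        refine card_le_card_of_injOn fold (fun y hy => ?_) (fun y hy y' hy' h => ?_)
        · simp only [fold, coe_image, coe_range, Set.mem_image, Set.mem_Iio]
          split_ifs with h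
          · obtain ⟨t, ht, rfl⟩ := h
            exact ⟨t, ht, rfl⟩
          · obtain ⟨t, ht, h' | h'⟩ := near y hy
            · exact absurd ⟨t, ht, h'⟩ h
            · exact ⟨t, ht, h'.symm⟩
        · simp only [fold] at h
          split_ifs at h
          · exact h
          · exact absurd (h ▸ hy) (not_shift_mem y' hy')
          · exact absurd (h.symm ▸ hy') (not_shift_mem y hy)
          · exact add_right_cancel h
    _ ≤ r := card_image_le.trans (card_range r).le

theorem intersecting_of_forall_exists_mem {α : Type*} [DecidableEq α] {k : ℕ} (hk : 2 ≤ k)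
    {F : Finset (Finset α)}
    (hkw : ∀ f : Fin k → Finset α, (∀ i, f i ∈ F) → ∃ v, ∀ i, v ∈ f i) :
    (F : Set (Finset α)).Intersecting := by
  intro A hA B hB
  obtain ⟨v, hv⟩ := hkw (fun i => if (i : ℕ) = 0 then A else B) fun i => by
    split_ifs
    exacts [hA, hB]
  exact not_disjoint_iff.mpr
    ⟨v, by simpa using hv ⟨0, by omega⟩, by simpa using hv ⟨1, by omega⟩⟩

theorem Equiv.Perm.exists_eq_prodShear_addRight {α : Type*} [Finite α] (c : Perm (α × Fin 2))
    (hc : ∀ i a, c (i, a + 1) = ((c (i, a)).1, (c (i, a)).2 + 1)) :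
    ∃ (σ : Perm α) (τ : α → Fin 2), c = σ.prodShear fun i => Equiv.addRight (τ i) := by
  have shift : ∀ i a, c (i, a) = ((c (i, 0)).1, (c (i, 0)).2 + a) := by
    intro i a
    fin_cases a
    · simp
    · simpa using hc i 0
  have inj : Function.Injective fun i => (c (i, 0)).1 := by
    intro i j h
    have : c (i, (c (j, 0)).2 - (c (i, 0)).2) = c (j, 0) := by
      rw [shift]
      exact Prod.ext h (by simp)
    exact congrArg Prod.fst (c.injective this)
  refine ⟨.ofBijective _ (Finite.injective_iff_bijective.mp inj), fun i => (c (i, 0)).2, ?_⟩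
  ext ⟨i, a⟩ : 1
  rw [shift]
  simp [add_comm]

section SignedEnumeration

variable {α β : Type*} [DecidableEq α] {P : Finset α} {A : Finset (α × β)}

abbrev EnumData (P : Finset α) (A : Finset (α × β)) : Type _ :=
  (P ≃ A) × ({j // j ∉ P} ≃ {i // i ∉ A.image Prod.fst}) × ({j // j ∉ P} → β)

noncomputable def fstEquivImage (hA : Set.InjOn Prod.fst (A : Set (α × β))) :
    A ≃ A.image Prod.fst :=
  Equiv.ofBijective (fun x => ⟨x.1.1, mem_image_of_mem _ x.2⟩)
    ⟨fun x y h => Subtype.ext (hA x.2 y.2 (congrArg Subtype.val h)), fun ⟨i, hi⟩ => by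
      obtain ⟨x, hx, rfl⟩ := mem_image.mp hi
      exact ⟨⟨x, hx⟩, rfl⟩⟩

noncomputable def permProdOfEnum (hA : Set.InjOn Prod.fst (A : Set (α × β)))
    (q : EnumData P A) : Perm α × (α → β) :=
  (Equiv.subtypeCongr (q.1.trans (fstEquivImage hA)) q.2.1,
    fun j => if h : j ∈ P then (q.1 ⟨j, h⟩ : α × β).2 else q.2.2 ⟨j, h⟩)

theorem permProdOfEnum_of_mem (hA : Set.InjOn Prod.fst (A : Set (α × β)))
    (q : EnumData P A) {j : α} (h : j ∈ P) :
    ((permProdOfEnum hA q).1 j, (permProdOfEnum hA q).2 j) = q.1 ⟨j, h⟩ := by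
  simp only [permProdOfEnum, subtypeCongr, fstEquivImage, trans_apply,
    sumCompl_symm_apply_of_pos h, sumCongr_apply, Sum.map_inl,
    sumCompl_apply_inl, h, ↓reduceDIte]
  rfl

theorem permProdOfEnum_of_notMem (hA : Set.InjOn Prod.fst (A : Set (α × β)))
    (q : EnumData P A) {j : α} (h : j ∉ P) :
    (permProdOfEnum hA q).1 j = q.2.1 ⟨j, h⟩ ∧
      (permProdOfEnum hA q).2 j = q.2.2 ⟨j, h⟩ := by
  simp [permProdOfEnum, Equiv.subtypeCongr, sumCompl_symm_apply_of_neg h, h]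

theorem image_permProdOfEnum [DecidableEq β] (hA : Set.InjOn Prod.fst (A : Set (α × β)))
    (q : EnumData P A) :
    P.image (fun j => ((permProdOfEnum hA q).1 j, (permProdOfEnum hA q).2 j)) = A := by
  ext x
  simp only [mem_image]
  constructor
  · rintro ⟨j, hj, rfl⟩
    rw [permProdOfEnum_of_mem hA q hj]
    exact (q.1 ⟨j, hj⟩).2
  · intro hx
    obtain ⟨⟨j, hj⟩, hjx⟩ := q.1.surjective ⟨x, hx⟩
    exact ⟨j, hj, by rw [permProdOfEnum_of_mem hA q hj, hjx]⟩

theorem permProdOfEnum_injective (hA : Set.InjOn Prod.fst (A : Set (α × β))) :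
    Function.Injective (permProdOfEnum (P := P) hA) := by
  rintro q q' h
  have h₁ : ∀ j, (permProdOfEnum hA q).1 j = (permProdOfEnum hA q').1 j := fun j => by rw [h]
  have h₂ : ∀ j, (permProdOfEnum hA q).2 j = (permProdOfEnum hA q').2 j := fun j => by rw [h]
  refine Prod.ext (Equiv.ext fun ⟨j, hj⟩ => Subtype.ext ?_)
    (Prod.ext (Equiv.ext fun ⟨j, hj⟩ => Subtype.ext ?_) (funext fun ⟨j, hj⟩ => ?_))
  · have e := permProdOfEnum_of_mem hA q hj
    rw [h₁, h₂] at e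
    exact e.symm.trans (permProdOfEnum_of_mem hA q' hj)
  · have e := (permProdOfEnum_of_notMem hA q hj).1
    rw [h₁] at e
    exact e.symm.trans (permProdOfEnum_of_notMem hA q' hj).1
  · have e := (permProdOfEnum_of_notMem hA q hj).2
    rw [h₂] at e
    exact e.symm.trans (permProdOfEnum_of_notMem hA q' hj).2

theorem le_card_filter_perm_prod_image_eq [Fintype α] [Fintype β] [DecidableEq β]
    (hA : Set.InjOn Prod.fst (A : Set (α × β))) (hPA : #P = #A) :
    (#P)! * ((Fintype.card α - #P)! * Fintype.card β ^ (Fintype.card α - #P)) ≤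
      #{p : Perm α × (α → β) | P.image (fun j => (p.1 j, p.2 j)) = A} := by
  have card_compl : Fintype.card {j // j ∉ P} = Fintype.card α - #P := by
    rw [Fintype.card_subtype_compl, Fintype.card_coe]
  have hP : Fintype.card P = Fintype.card A := by simp [hPA]
  have hQ : Fintype.card {j // j ∉ P} = Fintype.card {i // i ∉ A.image Prod.fst} := by
    rw [card_compl, Fintype.card_subtype_compl, Fintype.card_coe, card_image_of_injOn hA, hPA]
  calc (#P)! * ((Fintype.card α - #P)! * Fintype.card β ^ (Fintype.card α - #P))
      = Fintype.card (EnumData P A) := by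
        rw [Fintype.card_prod, Fintype.card_prod, Fintype.card_equiv (Fintype.equivOfCardEq hP),
          Fintype.card_equiv (Fintype.equivOfCardEq hQ), Fintype.card_fun, card_compl,
          Fintype.card_coe]
    _ ≤ _ := by
        rw [← card_univ]
        refine card_le_card_of_injOn (permProdOfEnum hA) (fun q _ => ?_)
          (permProdOfEnum_injective hA).injOn
        simpa using image_permProdOfEnum hA q

end SignedEnumeration

theorem two_mul_mul_factorial_mul_two_pow_choose {n r : ℕ} (hr : 1 ≤ r) (hrn : r ≤ n) :
    2 * n * (r ! * ((n - r)! * 2 ^ (n - r))) * (2 ^ (r - 1) * (n - 1).choose (r - 1)) =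
      r * (n ! * 2 ^ n) := by
  obtain ⟨r, rfl⟩ := Nat.exists_eq_add_of_le' hr
  obtain ⟨n, rfl⟩ := Nat.exists_eq_add_of_le' (hr.trans hrn)
  have hrn' : r ≤ n := by omega
  rw [show n + 1 - (r + 1) = n - r by omega, Nat.add_sub_cancel, Nat.add_sub_cancel,
    Nat.factorial_succ, Nat.factorial_succ, ← Nat.choose_mul_factorial_mul_factorial hrn',
    show 2 ^ (n + 1) = 2 * (2 ^ r * 2 ^ (n - r)) by
      rw [← pow_add, Nat.add_sub_cancel' hrn', pow_succ, mul_comm]]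
  ring

section Matching

variable {n : ℕ} [NeZero n]

theorem natCast_add_mul_injective :
    Function.Injective fun p : Fin n × Fin 2 =>
      (((p.1 : ℕ) + (p.2 : ℕ) * n : ℕ) : ZMod (2 * n)) := by
  rintro ⟨i, a⟩ ⟨j, b⟩ h
  have hn := NeZero.pos n
  have hlt : ∀ (i : Fin n) (a : Fin 2), (i : ℕ) + (a : ℕ) * n < 2 * n := fun i a => by
    have := i.2; have := a.2; nlinarith
  have h' := congrArg ZMod.val h
  simp only [ZMod.val_cast_of_lt (hlt _ _)] at h'
  fin_cases a <;> fin_cases b <;> simp at h' ⊢ <;> omega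

variable (n) in
noncomputable def matchingEquiv : Fin n × Fin 2 ≃ ZMod (2 * n) :=
  Equiv.ofBijective _ ((Fintype.bijective_iff_injective_and_card _).mpr
    ⟨natCast_add_mul_injective, by simp [mul_comm]⟩)

theorem matchingEquiv_apply (p : Fin n × Fin 2) :
    matchingEquiv n p = (((p.1 : ℕ) + (p.2 : ℕ) * n : ℕ) : ZMod (2 * n)) := rfl

theorem matchingEquiv_add_one (i : Fin n) (a : Fin 2) :
    matchingEquiv n (i, a + 1) = matchingEquiv n (i, a) + n := by
  simp only [matchingEquiv_apply]
  fin_cases a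
  · simp
  · have : ((2 * n : ℕ) : ZMod (2 * n)) = 0 := ZMod.natCast_self _
    simp only [Fin.reduceFinMk, Fin.isValue, Fin.reduceAdd, Fin.val_zero]
    push_cast at this ⊢
    linear_combination -this

theorem matchingEquiv_symm_add (v : ZMod (2 * n)) :
    (matchingEquiv n).symm (v + n) =
      (((matchingEquiv n).symm v).1, ((matchingEquiv n).symm v).2 + 1) := by
  rw [Equiv.symm_apply_eq, matchingEquiv_add_one, Prod.mk.eta, Equiv.apply_symm_apply]

theorem matchingEquiv_zero (i : Fin n) : matchingEquiv n (i, 0) = ((i : ℕ) : ZMod (2 * n)) := by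
  simp [matchingEquiv_apply]

end Matching

open scoped Classical

section SignedPerm

variable {n : ℕ} [NeZero n]

noncomputable def signedPerm (σ : Perm (Fin n)) (τ : Fin n → Fin 2) : Perm (ZMod (2 * n)) :=
  (matchingEquiv n).permCongr (σ.prodShear fun i => Equiv.addRight (τ i))

theorem signedPerm_matchingEquiv (σ : Perm (Fin n)) (τ : Fin n → Fin 2) (i : Fin n)
    (a : Fin 2) :
    signedPerm σ τ (matchingEquiv n (i, a)) = matchingEquiv n (σ i, a + τ i) := by
  simp [signedPerm, permCongr_apply]

theorem isGood_signedPerm (σ : Perm (Fin n)) (τ : Fin n → Fin 2) :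
    IsGood n (signedPerm σ τ) := by
  intro x
  obtain ⟨⟨i, a⟩, rfl⟩ := (matchingEquiv n).surjective x
  rw [← matchingEquiv_add_one, signedPerm_matchingEquiv, signedPerm_matchingEquiv,
    ← matchingEquiv_add_one, add_right_comm]

theorem signedPerm_injective :
    Function.Injective fun p : Perm (Fin n) × (Fin n → Fin 2) => signedPerm p.1 p.2 := by
  rintro ⟨σ, τ⟩ ⟨σ', τ'⟩ h
  have h' : ∀ i, (σ i, τ i) = (σ' i, τ' i) := fun i => by
    simpa [signedPerm_matchingEquiv] using congrArg (· (matchingEquiv n (i, 0))) h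
  simp only [Prod.mk.injEq] at h' ⊢
  exact ⟨Equiv.ext fun i => (h' i).1, funext fun i => (h' i).2⟩

theorem IsGood.exists_signedPerm_eq {c : Perm (ZMod (2 * n))} (hc : IsGood n c) :
    ∃ σ τ, signedPerm σ τ = c := by
  obtain ⟨σ, τ, h⟩ := ((matchingEquiv n).symm.permCongr c).exists_eq_prodShear_addRight
    fun i a => by
      simp only [permCongr_apply, symm_symm, matchingEquiv_add_one, hc _, matchingEquiv_symm_add]
  refine ⟨σ, τ, ?_⟩
  rw [signedPerm, ← h]
  ext x
  simp [permCongr_apply]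

theorem card_filter_isGood_le : #{c : Perm (ZMod (2 * n)) | IsGood n c} ≤ n ! * 2 ^ n := by
  calc #{c : Perm (ZMod (2 * n)) | IsGood n c}
      ≤ #(univ.image fun p : Perm (Fin n) × (Fin n → Fin 2) => signedPerm p.1 p.2) := by
        refine card_le_card fun c hc => ?_
        obtain ⟨σ, τ, rfl⟩ := IsGood.exists_signedPerm_eq (mem_filter.mp hc).2
        exact mem_image_of_mem _ (mem_univ (σ, τ))
    _ ≤ n ! * 2 ^ n := by
        refine card_image_le.trans (le_of_eq ?_)
        simp [Fintype.card_perm]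

end SignedPerm

section Counting

variable {n r : ℕ}

theorem isGood_addLeft_trans {c : Perm (ZMod (2 * n))} (hc : IsGood n c) (t : ZMod (2 * n)) :
    IsGood n ((Equiv.addLeft t).trans c) := by
  intro x
  simp only [trans_apply, coe_addLeft, ← add_assoc, hc (t + x)]

theorem mInterval_addLeft_trans (c : Perm (ZMod (2 * n))) (t x : ZMod (2 * n)) :
    mInterval n r ((Equiv.addLeft t).trans c) x = mInterval n r c (t + x) := by
  simp only [mInterval, trans_apply, coe_addLeft, add_assoc]

variable [NeZero n]

theorem signedPerm_natCast (σ : Perm (Fin n)) (τ : Fin n → Fin 2) (j : Fin n) :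
    signedPerm σ τ ((j : ℕ) : ZMod (2 * n)) = matchingEquiv n (σ j, τ j) := by
  rw [← matchingEquiv_zero, signedPerm_matchingEquiv, zero_add]

theorem mInterval_signedPerm_zero (hrn : r ≤ n) (σ : Perm (Fin n)) (τ : Fin n → Fin 2) :
    mInterval n r (signedPerm σ τ) 0 =
      (({j : Fin n | (j : ℕ) < r} : Finset (Fin n)).image fun j => (σ j, τ j)).image
        (matchingEquiv n) := by
  unfold mInterval
  ext v
  simp only [zero_add, image_image, mem_image, mem_range, mem_filter, mem_univ, true_and,
    Function.comp_apply]
  constructor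
  · rintro ⟨i, hi, rfl⟩
    exact ⟨⟨i, by omega⟩, hi, (signedPerm_natCast σ τ ⟨i, by omega⟩).symm⟩
  · rintro ⟨j, hj, rfl⟩
    exact ⟨j, hj, signedPerm_natCast σ τ j⟩

theorem Indep.injOn_fst_image_matchingEquiv_symm {A : Finset (ZMod (2 * n))} (hA : Indep n A) :
    Set.InjOn Prod.fst (A.image (matchingEquiv n).symm : Set (Fin n × Fin 2)) := by
  rintro ⟨i, a⟩ hp ⟨j, b⟩ hq (rfl : i = j)
  obtain ⟨v, hv, hva⟩ := mem_image.mp hp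
  obtain ⟨w, hw, hwb⟩ := mem_image.mp hq
  rw [symm_apply_eq] at hva hwb
  by_contra hab
  have hb : b = a + 1 := by
    fin_cases a <;> fin_cases b <;> simp_all
  exact hA v hv (by rwa [hva, ← matchingEquiv_add_one, ← hb, ← hwb])

theorem mul_card_filter_mInterval_zero_le (A : Finset (ZMod (2 * n))) :
    2 * n * #{c : Perm (ZMod (2 * n)) | IsGood n c ∧ mInterval n r c 0 = A} ≤
      #{p : Perm (ZMod (2 * n)) × ZMod (2 * n) | IsGood n p.1 ∧ mInterval n r p.1 p.2 = A} := by
  have hprod : #(({c : Perm (ZMod (2 * n)) | IsGood n c ∧ mInterval n r c 0 = A} : Finset _) ×ˢ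
      (univ : Finset (ZMod (2 * n)))) =
      #{c : Perm (ZMod (2 * n)) | IsGood n c ∧ mInterval n r c 0 = A} * (2 * n) := by
    rw [card_product, card_univ, ZMod.card]
  rw [mul_comm, ← hprod]
  refine card_le_card_of_injOn (fun q => ((Equiv.addLeft (-q.2)).trans q.1, q.2))
    (fun q hq => ?_) (fun q _ q' _ h => ?_)
  · obtain ⟨hc, hA⟩ := (mem_filter.mp (mem_product.mp hq).1).2
    simp only [coe_filter, Set.mem_ofPred_eq, mem_univ, true_and]
    rw [mInterval_addLeft_trans, neg_add_cancel]
    exact ⟨isGood_addLeft_trans hc _, hA⟩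
  · simp only [Prod.mk.injEq] at h
    obtain ⟨h₁, h₂⟩ := h
    rw [h₂] at h₁
    refine Prod.ext (Equiv.ext fun y => ?_) h₂
    simpa using DFunLike.congr_fun h₁ (q'.2 + y)

theorem le_card_filter_mInterval_eq (hrn : r ≤ n) {A : Finset (ZMod (2 * n))} (hAr : #A = r)
    (hA : Indep n A) :
    2 * n * (r ! * ((n - r)! * 2 ^ (n - r))) ≤
      #{p : Perm (ZMod (2 * n)) × ZMod (2 * n) | IsGood n p.1 ∧ mInterval n r p.1 p.2 = A} := by
  set P : Finset (Fin n) := {j | (j : ℕ) < r}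
  have hP : #P = r := by simp [P, Fin.card_filter_val_lt, hrn]
  calc 2 * n * (r ! * ((n - r)! * 2 ^ (n - r)))
      ≤ 2 * n * #{p : Perm (Fin n) × (Fin n → Fin 2) |
          P.image (fun j => (p.1 j, p.2 j)) = A.image (matchingEquiv n).symm} := by
        gcongr
        have := le_card_filter_perm_prod_image_eq hA.injOn_fst_image_matchingEquiv_symm
          (by rw [hP, card_image_of_injective _ (Equiv.injective _), hAr])
        simpa [hP] using this
    _ ≤ 2 * n * #{c : Perm (ZMod (2 * n)) | IsGood n c ∧ mInterval n r c 0 = A} := by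
        gcongr
        refine card_le_card_of_injOn (fun p => signedPerm p.1 p.2) (fun p hp => ?_)
          signedPerm_injective.injOn
        simp only [coe_filter, Set.mem_ofPred_eq, mem_univ, true_and] at hp ⊢
        rw [mInterval_signedPerm_zero hrn, hp, image_image, self_comp_symm, image_id]
        exact ⟨isGood_signedPerm _ _, rfl⟩
    _ ≤ _ := mul_card_filter_mInterval_zero_le A

theorem card_filter_mInterval_mem_le (hrn : r ≤ n) {F : Finset (Finset (ZMod (2 * n)))}
    (hF : (F : Set (Finset (ZMod (2 * n)))).Intersecting) (c : Perm (ZMod (2 * n))) :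
    #{x | mInterval n r c x ∈ F} ≤ r := by
  refine card_le_of_pairwise_intervals_meet (by omega) fun x hx y hy => ?_
  obtain ⟨v, hvx, hvy⟩ := not_disjoint_iff.mp (hF (mem_filter.mp hx).2 (mem_filter.mp hy).2)
  obtain ⟨i, hi, rfl⟩ := mem_image.mp hvx
  obtain ⟨j, hj, hij⟩ := mem_image.mp hvy
  exact ⟨i, mem_range.mp hi, j, mem_range.mp hj, c.injective hij.symm⟩

theorem mul_card_le_of_intersecting (hrn : r ≤ n) {F : Finset (Finset (ZMod (2 * n)))}
    (hF : (F : Set (Finset (ZMod (2 * n)))).Intersecting)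
    (hmem : ∀ A ∈ F, #A = r ∧ Indep n A) :
    2 * n * (r ! * ((n - r)! * 2 ^ (n - r))) * #F ≤ r * (n ! * 2 ^ n) := by
  set T : Finset (Perm (ZMod (2 * n)) × ZMod (2 * n)) :=
    {p | IsGood n p.1 ∧ mInterval n r p.1 p.2 ∈ F}
  calc 2 * n * (r ! * ((n - r)! * 2 ^ (n - r))) * #F
      ≤ #T := by
        refine mul_card_image_le_card_of_maps_to (f := fun p => mInterval n r p.1 p.2)
          (fun p hp => (mem_filter.mp hp).2.2) _ fun A hA => ?_
        convert le_card_filter_mInterval_eq hrn (hmem A hA).1 (hmem A hA).2 using 2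
        ext p
        simp only [T, mem_filter, mem_univ, true_and]
        exact ⟨fun h => ⟨h.1.1, h.2⟩, fun h => ⟨⟨h.1, h.2 ▸ hA⟩, h.2⟩⟩
    _ ≤ r * #{c : Perm (ZMod (2 * n)) | IsGood n c} := by
        refine card_le_mul_card_image_of_maps_to (f := Prod.fst)
          (fun p hp => mem_filter.mpr ⟨mem_univ _, (mem_filter.mp hp).2.1⟩) r fun c _ => ?_
        refine (card_le_card_of_injOn Prod.snd (fun p hp => ?_) fun p hp q hq h => ?_).trans
          (card_filter_mInterval_mem_le hrn hF c)
        · simp only [T, coe_filter, mem_filter, mem_univ, true_and, Set.mem_ofPred_eq] at hp ⊢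
          exact hp.2 ▸ hp.1.2
        · simp only [T, coe_filter, mem_filter, mem_univ, true_and, Set.mem_ofPred_eq] at hp hq
          exact Prod.ext (hp.2.trans hq.2.symm) h
    _ ≤ r * (n ! * 2 ^ n) := by
        gcongr
        exact card_filter_isGood_le

end Counting

theorem kwise_intersecting_independent_bound_general (n r k : ℕ) (hk : 2 ≤ k)
    (hrn : r ≤ n)
    (F : Finset (Finset (ZMod (2 * n))))
    (hmem : ∀ A ∈ F, A.card = r ∧ Indep n A)
    (hkw : ∀ f : Fin k → Finset (ZMod (2 * n)), (∀ i, f i ∈ F) → ∃ v, ∀ i, v ∈ f i) :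
    F.card ≤ 2 ^ (r - 1) * (n - 1).choose (r - 1) := by
  obtain rfl | ⟨A₀, hA₀⟩ := F.eq_empty_or_nonempty
  · simp
  have hF := intersecting_of_forall_exists_mem hk hkw
  have hr : 1 ≤ r :=
    (hmem A₀ hA₀).1 ▸ card_pos.mpr (nonempty_iff_ne_empty.mpr (hF.ne_bot hA₀))
  have hn : 0 < n := by omega
  have : NeZero n := ⟨hn.ne'⟩
  have key := mul_card_le_of_intersecting hrn hF hmem
  rw [← two_mul_mul_factorial_mul_two_pow_choose hr hrn] at key
  exact Nat.le_of_mul_le_mul_left key (by positivity)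

/-- For `k ≥ 2` and `r ≤ n` with `r ≤ (k-1)(2n)/k`, a `k`-wise intersecting family of
independent `r`-subsets of `M_n` has size at most `2^(r-1) C(n-1, r-1)`. -/
theorem kwise_intersecting_independent_bound (n r k : ℕ) (hk : 2 ≤ k) (hn : 0 < n)
    (hrn : r ≤ n) (hr : k * r ≤ (k - 1) * (2 * n))
    (F : Finset (Finset (ZMod (2 * n))))
    (hmem : ∀ A ∈ F, A.card = r ∧ Indep n A)
    (hkw : ∀ f : Fin k → Finset (ZMod (2 * n)), (∀ i, f i ∈ F) → ∃ v, ∀ i, v ∈ f i) :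
    F.card ≤ 2 ^ (r - 1) * (n - 1).choose (r - 1) :=
  kwise_intersecting_independent_bound_general n r k hk hrn F hmem hkw
end

section
/- For n < r ≤ 2n and any vertex x of M_n, the number of r-subsets of V(M_n) containing x and containing a maximum independent set of M_n equals 2^{2n-r} C(n-1, r-n-1) + 2^{2n-r-1} C(n-1, r-n). -/
open Finset

section OptionFunctions

variable {α β : Type*} [Fintype α] [DecidableEq α]

lemma card_filter_eq_none_eq_add (f : α → Option β) (a₀ : α) :
    #{a | f a = none}
      = (if f a₀ = none then 1 else 0) + #{a : {a // a ≠ a₀} | f a = none} := by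
  simp only [card_filter]
  exact Fintype.sum_eq_add_sum_subtype_ne _ a₀

lemma natCard_fun_option_apply_eq (a₀ : α) (o : Option β) (k : ℕ) :
    Nat.card {f : α → Option β //
        f a₀ = o ∧ #{a | f a = none} = (if o = none then 1 else 0) + k}
      = Nat.card {g : {a // a ≠ a₀} → Option β // #{a | g a = none} = k} := by
  let e := (Equiv.funSplitAt a₀ (Option β)).subtypeEquiv
    (p := fun f => f a₀ = o ∧ #{a | f a = none} = (if o = none then 1 else 0) + k)
    (q := fun p => p.1 = o ∧ #{a | p.2 a = none} = k) fun f => by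
      simp only [Equiv.funSplitAt_apply, card_filter_eq_none_eq_add f a₀]
      constructor <;> rintro ⟨rfl, h⟩ <;> exact ⟨rfl, by omega⟩
  rw [Nat.card_congr (e.trans (Equiv.subtypeProdEquivProd (p := (· = o))
      (q := fun g : {a // a ≠ a₀} → Option β => #{a | g a = none} = k))),
    Nat.card_prod, Nat.card_unique, one_mul]

variable [Fintype β]

lemma card_option_eq_none_iff (P : Prop) [Decidable P] :
    Fintype.card {o : Option β // o = none ↔ P} = if P then 1 else Fintype.card β := by
  split_ifs with hP
  · simp [hP]
  · simpa [hP, Option.ne_none_iff_isSome] using Fintype.card_congr (Equiv.optionIsSomeEquiv β)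

lemma card_fun_option_none_set_eq (s : Finset α) :
    #{f : α → Option β | ({a | f a = none} : Finset α) = s}
      = Fintype.card β ^ (Fintype.card α - #s) := by
  calc #{f : α → Option β | ({a | f a = none} : Finset α) = s}
      = Fintype.card {f : α → Option β // ∀ a, f a = none ↔ a ∈ s} := by
        rw [Fintype.card_subtype]
        congr 1
        ext f
        simp [Finset.ext_iff]
    _ = ∏ a, if a ∈ s then 1 else Fintype.card β := by
        rw [Fintype.card_congr
          (Equiv.subtypePiEquivPi (p := fun a (o : Option β) => o = none ↔ a ∈ s)),
          Fintype.card_pi]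
        simp only [card_option_eq_none_iff]
    _ = Fintype.card β ^ (Fintype.card α - #s) := by
        rw [prod_ite, prod_const_one, one_mul, prod_const, filter_not,
          card_sdiff_of_subset (filter_subset _ _)]
        simp

theorem natCard_fun_option_none_eq (k : ℕ) :
    Nat.card {f : α → Option β // #{a | f a = none} = k}
      = (Fintype.card α).choose k * Fintype.card β ^ (Fintype.card α - k) := by
  rw [Nat.card_eq_fintype_card, Fintype.card_subtype,
    card_eq_sum_card_fiberwise (f := fun f => ({a | f a = none} : Finset α))
      (t := univ.powersetCard k) (by intro f hf; simpa using hf)]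
  rw [sum_congr rfl fun s hs => ?_, sum_const, card_powersetCard, card_univ, smul_eq_mul]
  rw [filter_filter, ← (mem_powersetCard.mp hs).2, ← card_fun_option_none_set_eq]
  exact congrArg card (filter_congr fun f _ => and_iff_right_of_imp (congrArg card))

lemma natCard_fun_option_bool_ne_some_eq (a₀ : α) (b₀ : Bool) (k : ℕ) :
    Nat.card {f : α → Option Bool // #{a | f a = none} = k + 1 ∧ f a₀ ≠ some !b₀}
      = Nat.card {g : {a // a ≠ a₀} → Option Bool // #{a | g a = none} = k}
        + Nat.card {g : {a // a ≠ a₀} → Option Bool // #{a | g a = none} = k + 1} := by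
  have hnone := natCard_fun_option_apply_eq a₀ (none : Option Bool) k
  have hsome := natCard_fun_option_apply_eq a₀ (some b₀) (k + 1)
  simp only [↓reduceIte, reduceCtorEq, zero_add] at hnone hsome
  have hdisj : Disjoint (fun f : α → Option Bool => f a₀ = none ∧ #{a | f a = none} = 1 + k)
      (fun f => f a₀ = some b₀ ∧ #{a | f a = none} = k + 1) := by
    simp only [Pi.disjoint_iff, Prop.disjoint_iff]
    rintro f ⟨⟨h, -⟩, h', -⟩
    simp [h] at h'
  rw [← hnone, ← hsome, ← Nat.card_sum, ← Nat.card_congr (subtypeOrEquiv _ _ hdisj)]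
  refine Nat.card_congr (Equiv.subtypeEquivRight fun f => ?_)
  generalize f a₀ = o
  rcases o with _ | c
  · simp [add_comm]
  · cases c <;> cases b₀ <;> simp

end OptionFunctions

section MatchingCovers

variable {α V : Type*} [Fintype α] [DecidableEq V] (e : α × Bool ≃ V)

def vertexCoverEquiv : {A : Finset V // ∀ a, ∃ b, e (a, b) ∈ A} ≃ (α → Option Bool) where
  toFun A a :=
    if e (a, false) ∉ A.1 then some true else if e (a, true) ∉ A.1 then some false else none
  invFun f := ⟨({p : α × Bool | f p.1 ≠ some !p.2} : Finset _).map e.toEmbedding, fun a => by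
    cases h : f a with
    | none => exact ⟨true, by simp [h]⟩
    | some b => exact ⟨b, by simp [h]⟩⟩
  left_inv A := by
    ext v
    obtain ⟨⟨a, b⟩, rfl⟩ := e.surjective v
    obtain ⟨c, hc⟩ := A.2 a
    cases b <;> cases c <;> by_cases h0 : e (a, false) ∈ A.1 <;>
      by_cases h1 : e (a, true) ∈ A.1 <;> simp_all
  right_inv f := by
    funext a
    cases h : f a with
    | none => simp [h]
    | some b => cases b <;> simp [h]

lemma mem_vertexCoverEquiv_symm (f : α → Option Bool) (a : α) (b : Bool) :
    e (a, b) ∈ ((vertexCoverEquiv e).symm f).1 ↔ f a ≠ some !b := by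
  simp [vertexCoverEquiv]

lemma card_vertexCoverEquiv_symm (f : α → Option Bool) :
    #((vertexCoverEquiv e).symm f).1 = Fintype.card α + #{a | f a = none} := by
  have hfiber : ∀ a, #{b | f a ≠ some !b} = 1 + if f a = none then 1 else 0 := by
    intro a
    cases f a with
    | none => rfl
    | some c => cases c <;> rfl
  rw [vertexCoverEquiv, Equiv.coe_fn_symm_mk, card_map, card_filter, Fintype.sum_prod_type]
  simp only [← card_filter, hfiber, sum_add_distrib, sum_const, card_univ, smul_eq_mul, mul_one]

theorem exists_indep_subset_iff [DecidableEq α] (σ : V → V)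
    (hσ : ∀ a b, σ (e (a, b)) = e (a, !b)) (A : Finset V) :
    (∃ S ⊆ A, (∀ v ∈ S, σ v ∉ S) ∧ #S = Fintype.card α) ↔ ∀ a, ∃ b, e (a, b) ∈ A := by
  constructor
  · rintro ⟨S, hSA, hS, hcard⟩ a
    have hinj : Set.InjOn (fun v => (e.symm v).1) S := by
      intro u hu w hw h
      obtain ⟨⟨a, b⟩, rfl⟩ := e.surjective u
      obtain ⟨⟨c, d⟩, rfl⟩ := e.surjective w
      simp only [Equiv.symm_apply_apply] at h
      subst h
      by_contra hne
      have hd : d = !b := by cases b <;> cases d <;> simp_all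
      exact hS _ hu (hσ a b ▸ hd ▸ hw)
    have himage : S.image (fun v => (e.symm v).1) = univ :=
      eq_univ_of_card _ (by rw [card_image_of_injOn hinj, hcard])
    obtain ⟨v, hv, rfl⟩ := mem_image.mp (himage ▸ mem_univ a)
    exact ⟨(e.symm v).2, by simpa using hSA hv⟩
  · intro hA
    choose c hc using hA
    have hinj : Function.Injective fun a => e (a, c a) := fun a a' h => by
      simpa using congrArg Prod.fst (e.injective h)
    refine ⟨univ.map ⟨_, hinj⟩, ?_, ?_, by simp⟩
    · intro v hv
      obtain ⟨a, -, rfl⟩ := mem_map.mp hv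
      exact hc a
    · simp only [mem_map, mem_univ, true_and, Function.Embedding.coeFn_mk, forall_exists_index,
        forall_apply_eq_imp_iff, hσ, not_exists]
      intro a a' h
      obtain ⟨rfl, hc'⟩ := Prod.ext_iff.mp (e.injective h)
      exact Bool.not_ne_self _ hc'.symm

lemma natCard_vertexCover_eq (a₀ : α) (b₀ : Bool) (k : ℕ) :
    Nat.card {A : Finset V // #A = Fintype.card α + k ∧ e (a₀, b₀) ∈ A ∧ ∀ a, ∃ b, e (a, b) ∈ A}
      = Nat.card {f : α → Option Bool // #{a | f a = none} = k ∧ f a₀ ≠ some !b₀} := by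
  refine Nat.card_congr <| (Equiv.subtypeEquivRight fun A => by tauto).trans <|
    (Equiv.subtypeSubtypeEquivSubtypeInter (fun A => ∀ a, ∃ b, e (a, b) ∈ A)
      (fun A => #A = Fintype.card α + k ∧ e (a₀, b₀) ∈ A)).symm.trans <|
    ((vertexCoverEquiv e).symm.subtypeEquiv fun f => ?_).symm
  rw [card_vertexCoverEquiv_symm, mem_vertexCoverEquiv_symm, Nat.add_left_cancel_iff]

theorem natCard_card_eq_mem_vertexCover [DecidableEq α] (a₀ : α) (b₀ : Bool) (r : ℕ)
    (hr : Fintype.card α < r) :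
    Nat.card {A : Finset V // #A = r ∧ e (a₀, b₀) ∈ A ∧ ∀ a, ∃ b, e (a, b) ∈ A}
      = 2 ^ (2 * Fintype.card α - r) * (Fintype.card α - 1).choose (r - Fintype.card α - 1)
        + 2 ^ (2 * Fintype.card α - r - 1) * (Fintype.card α - 1).choose (r - Fintype.card α) := by
  set m := Fintype.card α
  obtain ⟨k, rfl⟩ : ∃ k, r = m + (k + 1) := ⟨r - m - 1, by omega⟩
  have hcard : Fintype.card {a // a ≠ a₀} = m - 1 := by simp [m]
  rw [natCard_vertexCover_eq, natCard_fun_option_bool_ne_some_eq, natCard_fun_option_none_eq,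
    natCard_fun_option_none_eq, hcard, Fintype.card_bool]
  have h1 : 2 * m - (m + (k + 1)) = m - 1 - k := by omega
  have h2 : 2 * m - (m + (k + 1)) - 1 = m - 1 - (k + 1) := by omega
  rw [h2, h1, Nat.add_sub_cancel_left, Nat.add_sub_cancel]
  ring

end MatchingCovers

noncomputable def finBoolEquivZMod (n : ℕ) [NeZero n] : Fin n × Bool ≃ ZMod (2 * n) :=
  Equiv.ofBijective (fun p => ((p.1 + n * p.2.toNat : ℕ) : ZMod (2 * n))) <| by
    rw [Fintype.bijective_iff_injective_and_card]
    refine ⟨?_, by simp [ZMod.card]; ring⟩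
    rintro ⟨j, b⟩ ⟨j', b'⟩ h
    have hj := j.isLt
    have hj' := j'.isLt
    have hval := congrArg ZMod.val h
    rw [ZMod.val_cast_of_lt (by cases b <;> simp <;> omega),
      ZMod.val_cast_of_lt (by cases b' <;> simp <;> omega)] at hval
    cases b <;> cases b' <;> simp [Fin.ext_iff] at hval ⊢ <;> omega

lemma finBoolEquivZMod_not (n : ℕ) [NeZero n] (j : Fin n) (b : Bool) :
    finBoolEquivZMod n (j, !b) = finBoolEquivZMod n (j, b) + n := by
  have h2n : ((2 * n : ℕ) : ZMod (2 * n)) = 0 := ZMod.natCast_self _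
  cases b <;> simp only [finBoolEquivZMod, Equiv.ofBijective_apply] <;> push_cast at h2n ⊢ <;>
    simp
  linear_combination -h2n

/-- For `n < r ≤ 2n` and a vertex `x` of `M_n`, the number of `r`-subsets of `V(M_n)`
containing `x` and containing a maximum independent set equals
`2^(2n-r) C(n-1, r-n-1) + 2^(2n-r-1) C(n-1, r-n)`. -/
theorem card_max_indep_star (n r : ℕ) (hn : n < r) (hr : r ≤ 2 * n) (x : ZMod (2 * n)) :
    Nat.card {A : Finset (ZMod (2 * n)) //
        A.card = r ∧ x ∈ A ∧ ∃ S ⊆ A, Indep n S ∧ S.card = n}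
      = 2 ^ (2 * n - r) * (n - 1).choose (r - n - 1)
        + 2 ^ (2 * n - r - 1) * (n - 1).choose (r - n) := by
  have : NeZero n := ⟨by omega⟩
  obtain ⟨⟨j₀, b₀⟩, rfl⟩ := (finBoolEquivZMod n).surjective x
  have hindep (A : Finset (ZMod (2 * n))) :
      (∃ S ⊆ A, Indep n S ∧ #S = n) ↔ ∀ j, ∃ b, finBoolEquivZMod n (j, b) ∈ A := by
    simpa [Indep] using exists_indep_subset_iff (finBoolEquivZMod n) (· + n)
      (fun j b => (finBoolEquivZMod_not n j b).symm) A
  simp_rw [hindep]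
  simpa using natCard_card_eq_mem_vertexCover (finBoolEquivZMod n) j₀ b₀ r (by simpa using hn)
end
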